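/- arXiv:1404.0529 — 6 statements merged into one kernel-verified Lean document; each statement's English description precedes it below -/
import Mathlib

section
/- Let b ≥ 0 be fixed, μ = b + iω, and for r > 0, ν ≥ 0 define φ(r;ω,ν) := Re[μ ξ(μ^{-1/2} r)] − r²/2 − (b/2) log⟨μ^{-1/2} r⟩, where ξ(μ^{-1/2} r) = μ^{-1/2} ∫₁^r √(1 + s²/μ + ν²/(μ s²)) ds and ⟨z⟩ = √(1+|z|²). Then there exists ω₀ (depending only on b) such that for all ω ≥ ω₀, ν ≥ 0, the function r ↦ φ(r;ω,ν) is nondecreasing on (0,∞). -/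
open Complex MeasureTheory

private lemma aux_sq_cpow_half (z : ℂ) : (z ^ (1/2 : ℂ)) ^ 2 = z := by
  have := Complex.cpow_ofNat_inv_pow z 2
  norm_num at this; exact this

private lemma aux_cpow_half_re (z : ℂ) (hz : z ≠ 0) :
    (z ^ (1/2 : ℂ)).re = Real.exp ((Complex.log z).re / 2) * Real.cos (z.arg / 2) := by
  rw [Complex.cpow_def_of_ne_zero hz, Complex.exp_re]
  have h1 : (Complex.log z * (1/2 : ℂ)).re = (Complex.log z).re / 2 := by
    simp [Complex.mul_re]; ring
  have h2 : (Complex.log z * (1/2 : ℂ)).im = z.arg / 2 := by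
    simp [Complex.mul_im, Complex.log_im]; ring
  rw [h1, h2]

private lemma aux_cpow_half_im (z : ℂ) (hz : z ≠ 0) :
    (z ^ (1/2 : ℂ)).im = Real.exp ((Complex.log z).re / 2) * Real.sin (z.arg / 2) := by
  rw [Complex.cpow_def_of_ne_zero hz, Complex.exp_im]
  have h1 : (Complex.log z * (1/2 : ℂ)).re = (Complex.log z).re / 2 := by
    simp [Complex.mul_re]; ring
  have h2 : (Complex.log z * (1/2 : ℂ)).im = z.arg / 2 := by
    simp [Complex.mul_im, Complex.log_im]; ring
  rw [h1, h2]

private lemma aux_re_im (μ : ℂ) (t : ℝ) :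
    ((1 : ℂ) + (t : ℂ) * μ⁻¹).re = 1 + t * (μ.re / Complex.normSq μ) ∧
    ((1 : ℂ) + (t : ℂ) * μ⁻¹).im = t * (-μ.im / Complex.normSq μ) := by
  simp [Complex.mul_re, Complex.mul_im, Complex.inv_re, Complex.inv_im]

private lemma aux_q (z w : ℂ) (hzre : 0 ≤ z.re) (hzim : 0 ≤ z.im) (hz : z ≠ 0)
    (hwim : w.im < 0) (c : ℝ) (hc : z * w = z + (c : ℂ)) (hcre : 0 ≤ z.re + c) :
    Real.sqrt (z.re + c) ≤ (z ^ (1/2 : ℂ) * w ^ (1/2 : ℂ)).re := by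
  have hw : w ≠ 0 := fun h => by rw [h] at hwim; simp at hwim
  have hπ := Real.pi_pos
  have ha1 : 0 ≤ z.arg := Complex.arg_nonneg_iff.mpr hzim
  have ha2 : z.arg < Real.pi := Complex.arg_lt_pi_iff.mpr (Or.inl hzre)
  have ha3 : z.arg ≤ Real.pi := Complex.arg_le_pi z
  have hb1 : w.arg < 0 := Complex.arg_neg_iff.mpr hwim
  have hb2 : -Real.pi < w.arg := Complex.neg_pi_lt_arg w
  have hure : 0 < (z ^ (1/2 : ℂ)).re := by
    rw [aux_cpow_half_re z hz]
    exact mul_pos (Real.exp_pos _)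
      (Real.cos_pos_of_mem_Ioo ⟨by linarith, by linarith⟩)
  have huim : 0 ≤ (z ^ (1/2 : ℂ)).im := by
    rw [aux_cpow_half_im z hz]
    exact mul_nonneg (Real.exp_pos _).le
      (Real.sin_nonneg_of_nonneg_of_le_pi (by linarith) (by linarith))
  have hvre : 0 < (w ^ (1/2 : ℂ)).re := by
    rw [aux_cpow_half_re w hw]
    exact mul_pos (Real.exp_pos _)
      (Real.cos_pos_of_mem_Ioo ⟨by linarith, by linarith⟩)
  have hvim : (w ^ (1/2 : ℂ)).im ≤ 0 := by
    rw [aux_cpow_half_im w hw]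
    apply mul_nonpos_of_nonneg_of_nonpos (Real.exp_pos _).le
    have h := Real.sin_nonneg_of_nonneg_of_le_pi (x := -(w.arg / 2))
      (by linarith) (by linarith)
    rw [Real.sin_neg] at h
    linarith
  have hqre : 0 ≤ (z ^ (1/2 : ℂ) * w ^ (1/2 : ℂ)).re := by
    rw [Complex.mul_re]
    nlinarith [mul_nonpos_of_nonneg_of_nonpos huim hvim, mul_pos hure hvre]
  have hsq : (z ^ (1/2 : ℂ) * w ^ (1/2 : ℂ)) ^ 2 = z + (c : ℂ) := by
    rw [mul_pow, aux_sq_cpow_half, aux_sq_cpow_half, hc]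
  have h2 := congrArg Complex.re hsq
  rw [sq, Complex.mul_re] at h2
  simp only [Complex.add_re, Complex.ofReal_re] at h2
  have h3 : z.re + c ≤ (z ^ (1/2 : ℂ) * w ^ (1/2 : ℂ)).re ^ 2 := by
    nlinarith [sq_nonneg (z ^ (1/2 : ℂ) * w ^ (1/2 : ℂ)).im]
  calc Real.sqrt (z.re + c) ≤ Real.sqrt ((z ^ (1/2 : ℂ) * w ^ (1/2 : ℂ)).re ^ 2) :=
        Real.sqrt_le_sqrt h3
    _ = (z ^ (1/2 : ℂ) * w ^ (1/2 : ℂ)).re := Real.sqrt_sq hqre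

private lemma aux_arith (b r A q : ℝ) (hb : 0 ≤ b) (hr : 0 < r) (hA : b + 1 ≤ A)
    (hq : Real.sqrt (b + r^2) ≤ q) : 0 ≤ q - r - b*r/(2*(A+r^2)) := by
  have hS2 : Real.sqrt (b+r^2) ^ 2 = b + r^2 := Real.sq_sqrt (by positivity)
  have hS0 : 0 ≤ Real.sqrt (b+r^2) := Real.sqrt_nonneg _
  have hSr : r ≤ Real.sqrt (b+r^2) := by nlinarith
  have hApos : 0 < A := by linarith
  have hden : (0:ℝ) < 2*(A+r^2) := by positivity
  have h1 : 0 ≤ 2*A + r^2 - r*Real.sqrt (b+r^2) := by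
    nlinarith [sq_nonneg (r - Real.sqrt (b+r^2))]
  have key : b*r ≤ (Real.sqrt (b+r^2) - r)*(2*(A+r^2)) := by
    nlinarith [mul_nonneg (sub_nonneg.mpr hSr) h1]
  have hdiv : b*r/(2*(A+r^2)) ≤ Real.sqrt (b+r^2) - r := (div_le_iff₀ hden).mpr key
  linarith
/-- For fixed `b ≥ 0`, `μ = b + iω`, the function
`φ(r) = Re[μ ξ(μ^{-1/2}r)] − r²/2 − (b/2) log⟨μ^{-1/2}r⟩` is nondecreasing on `(0,∞)`
for all `ω ≥ ω₀` and `ν ≥ 0`, where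
`ξ(μ^{-1/2}r) = μ^{-1/2} ∫₁^r √(1 + s²/μ + ν²/(μ s²)) ds` (principal branches). -/
theorem stmt4 (b : ℝ) (hb : 0 ≤ b) :
    ∃ ω₀ : ℝ, 0 < ω₀ ∧ ∀ ω : ℝ, ω₀ ≤ ω → ∀ ν : ℝ, 0 ≤ ν →
      MonotoneOn (fun r : ℝ =>
        (((b : ℂ) + ω * Complex.I) *
            (((b : ℂ) + ω * Complex.I) ^ (-(1/2) : ℂ) *
              ∫ s in (1:ℝ)..r,
                (1 + (s : ℂ)^2 / ((b : ℂ) + ω * Complex.I) +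
                  (ν : ℂ)^2 / (((b : ℂ) + ω * Complex.I) * (s : ℂ)^2)) ^ (1/2 : ℂ))).re
          - r^2/2
          - (b/2) * Real.log (Real.sqrt (1 + r^2 / ‖((b : ℂ) + ω * Complex.I)‖)))
        (Set.Ioi 0) := by
  refine ⟨b + 1, by linarith, fun ω hω ν hν => ?_⟩
  have hωpos : 0 < ω := by linarith
  set μ : ℂ := (b : ℂ) + (ω : ℂ) * Complex.I with hμdef
  have hμre : μ.re = b := by simp [hμdef]
  have hμim : μ.im = ω := by simp [hμdef]
  have hμ : μ ≠ 0 := by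
    intro h
    rw [h] at hμim
    simp at hμim
    linarith
  have hnsq : 0 < Complex.normSq μ := Complex.normSq_pos.mpr hμ
  set A : ℝ := ‖μ‖ with hAdef
  have hA : b + 1 ≤ A := by
    have h1 : |μ.im| ≤ A := Complex.abs_im_le_norm μ
    rw [hμim] at h1
    calc b + 1 ≤ ω := hω
      _ ≤ |ω| := le_abs_self ω
      _ ≤ A := h1
  have hApos : 0 < A := by linarith
  set W : ℝ → ℂ := fun s => 1 + (s:ℂ)^2 / μ + (ν:ℂ)^2 / (μ * (s:ℂ)^2) with hWdef
  set f : ℝ → ℂ := fun s => W s ^ (1/2:ℂ) with hfdef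
  -- basic facts about W
  have hWeq : ∀ s : ℝ, 0 < s → W s = 1 + ((s^2 + ν^2/s^2 : ℝ) : ℂ) * μ⁻¹ := by
    intro s hs
    have hs0 : (s:ℂ) ≠ 0 := Complex.ofReal_ne_zero.mpr (ne_of_gt hs)
    rw [hWdef]
    push_cast
    field_simp
    ring
  have hWre : ∀ s : ℝ, 0 < s → 0 < (W s).re := by
    intro s hs
    rw [hWeq s hs, (aux_re_im μ _).1, hμre]
    have hts : (0:ℝ) < s^2 + ν^2/s^2 := by positivity
    have : 0 ≤ (s^2 + ν^2/s^2) * (b / Complex.normSq μ) := by positivity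
    linarith
  have hWim : ∀ s : ℝ, 0 < s → (W s).im < 0 := by
    intro s hs
    rw [hWeq s hs, (aux_re_im μ _).2, hμim]
    have hts : (0:ℝ) < s^2 + ν^2/s^2 := by positivity
    rw [neg_div, mul_neg]
    exact neg_lt_zero.mpr (mul_pos hts (div_pos hωpos hnsq))
  -- continuity of f on Ioi 0
  have hWcont : ContinuousOn W (Set.Ioi 0) := by
    apply ContinuousOn.add
    · apply ContinuousOn.add continuousOn_const
      exact ((Complex.continuous_ofReal.pow 2).div_const μ).continuousOn
    · apply ContinuousOn.div continuousOn_const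
      · exact (continuous_const.mul (Complex.continuous_ofReal.pow 2)).continuousOn
      · intro s hs
        exact mul_ne_zero hμ (pow_ne_zero _ (Complex.ofReal_ne_zero.mpr (ne_of_gt hs)))
  have hfcontAt : ∀ s ∈ Set.Ioi (0:ℝ), ContinuousAt f s := by
    intro s hs
    have hWs : ContinuousAt W s := hWcont.continuousAt (isOpen_Ioi.mem_nhds hs)
    exact hWs.cpow continuousAt_const (Or.inl (hWre s hs))
  have hfcont : ContinuousOn f (Set.Ioi 0) := fun s hs => (hfcontAt s hs).continuousWithinAt
  have hInt : ∀ r : ℝ, 0 < r → IntervalIntegrable f volume 1 r := by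
    intro r hr
    apply ContinuousOn.intervalIntegrable
    apply hfcont.mono
    intro x hx
    rw [Set.mem_uIcc] at hx
    rcases hx with ⟨h1, _⟩ | ⟨h1, _⟩
    · exact lt_of_lt_of_le one_pos h1
    · exact lt_of_lt_of_le hr h1
  -- cpow algebra
  have hu2 : (μ ^ (1/2:ℂ)) ^ 2 = μ := aux_sq_cpow_half μ
  have hu0 : μ ^ (1/2:ℂ) ≠ 0 := by
    intro h
    apply hμ
    rw [← hu2, h]
    norm_num
  have hμmul : μ * μ ^ (-(1/2):ℂ) = μ ^ (1/2:ℂ) := by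
    rw [show (-(1/2):ℂ) = -(1/2:ℂ) from by norm_num, Complex.cpow_neg,
      ← div_eq_mul_inv, div_eq_iff hu0, ← sq, hu2]
  -- the derivative
  have hDer : ∀ r ∈ Set.Ioi (0:ℝ), HasDerivAt (fun r : ℝ =>
      (μ * (μ ^ (-(1/2):ℂ) * ∫ s in (1:ℝ)..r, f s)).re
        - r^2/2 - (b/2) * Real.log (Real.sqrt (1 + r^2 / A)))
      ((μ ^ (1/2:ℂ) * f r).re - r - b*r/(2*(A + r^2))) r := by
    intro r hr
    have hr0 : 0 < r := hr
    have h1 : HasDerivAt (fun u : ℝ => ∫ s in (1:ℝ)..u, f s) (f r) r :=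
      intervalIntegral.integral_hasDerivAt_right (hInt r hr0)
        (ContinuousOn.stronglyMeasurableAtFilter isOpen_Ioi hfcont r hr)
        (hfcontAt r hr)
    have h2 : HasDerivAt (fun u : ℝ => μ * (μ ^ (-(1/2):ℂ) * ∫ s in (1:ℝ)..u, f s))
        (μ * (μ ^ (-(1/2):ℂ) * f r)) r := (h1.const_mul _).const_mul μ
    have h3 : HasDerivAt (fun u : ℝ => (μ * (μ ^ (-(1/2):ℂ) * ∫ s in (1:ℝ)..u, f s)).re)
        ((μ * (μ ^ (-(1/2):ℂ) * f r)).re) r :=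
      Complex.reCLM.hasFDerivAt.comp_hasDerivAt r h2
    have h4 : HasDerivAt (fun u : ℝ => u^2/2) r r := by
      have := (hasDerivAt_pow 2 r).div_const 2
      norm_num at this
      exact this
    have hppos : 0 < 1 + r^2 / A := by positivity
    have hp : HasDerivAt (fun u : ℝ => 1 + u ^ 2 / A) (2 * r / A) r := by
      have := ((hasDerivAt_pow 2 r).div_const A).const_add 1
      norm_num at this
      exact this.const_add 1
    have hlogeq : (fun u : ℝ => (b/2) * Real.log (Real.sqrt (1 + u^2/A)))
        = fun u : ℝ => (b/4) * Real.log (1 + u^2/A) := by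
      funext u
      rw [Real.log_sqrt (by positivity)]
      ring
    have hlog : HasDerivAt (fun u : ℝ => (b/2) * Real.log (Real.sqrt (1 + u^2/A)))
        ((b/4) * ((2 * r / A) / (1 + r^2/A))) r := by
      rw [hlogeq]
      exact (hp.log (ne_of_gt hppos)).const_mul (b/4)
    have hcomb := (h3.sub h4).sub hlog
    have hval : (μ * (μ ^ (-(1/2):ℂ) * f r)).re - r - ((b/4) * ((2 * r / A) / (1 + r^2/A)))
        = (μ ^ (1/2:ℂ) * f r).re - r - b*r/(2*(A + r^2)) := by
      have e1 : (μ * (μ ^ (-(1/2):ℂ) * f r)).re = (μ ^ (1/2:ℂ) * f r).re := by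
        rw [← mul_assoc, hμmul]
      have e2 : (b/4) * ((2 * r / A) / (1 + r^2/A)) = b*r/(2*(A + r^2)) := by
        rw [div_div]
        rw [show A * (1 + r^2/A) = A + r^2 from by field_simp]
        have hne : A + r^2 ≠ 0 := by positivity
        field_simp
        ring
      rw [e1, e2]
    exact hval ▸ hcomb
  apply monotoneOn_of_deriv_nonneg (convex_Ioi 0)
  · intro r hr
    exact ((hDer r hr).continuousAt).continuousWithinAt
  · rw [interior_Ioi]
    intro r hr
    exact (hDer r hr).differentiableAt.differentiableWithinAt
  · rw [interior_Ioi]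
    intro r hr
    rw [(hDer r hr).deriv]
    have hr0 : 0 < r := hr
    have hμW : μ * W r = μ + ((r^2 + ν^2/r^2 : ℝ) : ℂ) := by
      rw [hWeq r hr0]
      calc μ * (1 + ((r^2 + ν^2/r^2 : ℝ) : ℂ) * μ⁻¹)
          = μ + ((r^2 + ν^2/r^2 : ℝ) : ℂ) * (μ * μ⁻¹) := by ring
        _ = μ + ((r^2 + ν^2/r^2 : ℝ) : ℂ) := by rw [mul_inv_cancel₀ hμ, mul_one]
    have hq := aux_q μ (W r) (by rw [hμre]; exact hb) (by rw [hμim]; exact hωpos.le) hμ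
      (hWim r hr0) (r^2 + ν^2/r^2) hμW (by rw [hμre]; positivity)
    rw [hμre] at hq
    have hmono : Real.sqrt (b + r^2) ≤ Real.sqrt (b + (r^2 + ν^2/r^2)) := by
      apply Real.sqrt_le_sqrt
      have : (0:ℝ) ≤ ν^2/r^2 := by positivity
      linarith
    have hfr : f r = W r ^ (1/2:ℂ) := rfl
    rw [hfr]
    exact aux_arith b r A _ hb hr0 hA (le_trans hmono hq)
end

section
/- Let b ≥ 0 be fixed, μ = b + iω with ω large, ν ≥ 1, and α = ν^{-1} μ^{1/2} (principal square root). Define ζ(αr) = √(1 + α²r²) + log( αr / (1 + √(1+α²r²)) ) + γ for a constant γ ∈ ℂ, using principal branches. Then the function r ↦ Re ζ(αr) is nondecreasing on (0,∞); in particular Re(1/(r√(1+α²r²))) ≥ 0 for all r > 0. -/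
open Complex

lemma sqrt_pos_of_im_pos {z : ℂ} (hz : 0 < z.im) :
    0 < (z ^ (1/2 : ℂ)).re ∧ 0 < (z ^ (1/2 : ℂ)).im := by
  have hz0 : z ≠ 0 := by intro h; rw [h] at hz; simp at hz
  have harg : z.arg = Real.arccos (z.re / ‖z‖) := Complex.arg_of_im_pos hz
  have habs : |z.re| < ‖z‖ := (Complex.abs_re_lt_norm).2 hz.ne'
  have habs0 : 0 < ‖z‖ := norm_pos_iff.mpr hz0
  have h1 : z.re / ‖z‖ < 1 := by
    rw [div_lt_one habs0]; exact lt_of_abs_lt habs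
  have h2 : -1 < z.re / ‖z‖ := by
    rw [lt_div_iff₀ habs0]; nlinarith [neg_abs_le z.re, abs_nonneg z.re]
  have hargpos : 0 < z.arg := by rw [harg]; exact Real.arccos_pos.2 h1
  have harglt : z.arg < Real.pi := by
    rw [harg, Real.arccos]
    have := Real.neg_pi_div_two_lt_arcsin.2 h2
    linarith
  have hpi : (0:ℝ) < Real.pi := Real.pi_pos
  rw [Complex.cpow_def_of_ne_zero hz0]
  have him : (Complex.log z * (1/2 : ℂ)).im = z.arg / 2 := by
    simp [Complex.mul_im, Complex.log_im]; ring
  constructor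
  · rw [Complex.exp_re, him]
    have : 0 < Real.cos (z.arg / 2) :=
      Real.cos_pos_of_mem_Ioo ⟨by linarith, by linarith⟩
    positivity
  · rw [Complex.exp_im, him]
    have : 0 < Real.sin (z.arg / 2) :=
      Real.sin_pos_of_pos_of_lt_pi (by linarith) (by linarith)
    positivity

lemma key {α : ℂ} (hre : 0 < α.re) (him : 0 < α.im) (γ : ℂ) :
    (MonotoneOn (fun r : ℝ =>
        ((1 + α^2 * (r : ℂ)^2) ^ (1/2 : ℂ) +
          Complex.log ((α * (r : ℂ)) / (1 + (1 + α^2 * (r : ℂ)^2) ^ (1/2 : ℂ))) + γ).re)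
        (Set.Ioi 0)) ∧
    (∀ r : ℝ, 0 < r → 0 ≤ ((1 : ℂ) / ((r : ℂ) * (1 + α^2 * (r : ℂ)^2) ^ (1/2 : ℂ))).re) := by
  have hα0 : α ≠ 0 := by
    intro h; rw [h] at hre; simp at hre
  have hwim : ∀ r : ℝ, 0 < r → 0 < (1 + α^2 * (r : ℂ)^2).im := by
    intro r hr
    have h : (1 + α^2 * (r : ℂ)^2).im = (α.re * α.im + α.im * α.re) * r^2 := by
      simp [sq, Complex.add_im, Complex.mul_im, Complex.mul_re]
    rw [h]; positivity
  have hs := fun (r : ℝ) (hr : 0 < r) => sqrt_pos_of_im_pos (hwim r hr)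
  have hD : ∀ r : ℝ, 0 < r → HasDerivAt (fun t : ℝ =>
      ((1 + α^2 * (t : ℂ)^2) ^ (1/2 : ℂ) +
        Complex.log ((α * (t : ℂ)) / (1 + (1 + α^2 * (t : ℂ)^2) ^ (1/2 : ℂ))) + γ))
      ((1 + α^2 * (r : ℂ)^2) ^ (1/2 : ℂ) / (r : ℂ)) r := by
    intro r hr
    have hr0 : (r : ℂ) ≠ 0 := by
      simpa using (Complex.ofReal_ne_zero.2 hr.ne')
    set z : ℂ := (r : ℂ) with hz
    have hwim' : 0 < (1 + α^2 * z^2).im := hwim r hr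
    have hsre : 0 < ((1 + α^2 * z^2) ^ (1/2 : ℂ)).re := (hs r hr).1
    have hsim : 0 < ((1 + α^2 * z^2) ^ (1/2 : ℂ)).im := (hs r hr).2
    set s : ℂ := (1 + α^2 * z^2) ^ (1/2 : ℂ) with hsdef
    have hs0 : s ≠ 0 := by
      intro h; rw [h] at hsre; simp at hsre
    have h1s : (1 + s) ≠ 0 := by
      intro h
      have h2 : (1 + s).im = s.im := by simp
      rw [h] at h2; simp at h2; rw [← h2] at hsim; simp at hsim
    have hs2 : s^2 = 1 + α^2 * z^2 := by
      have h := Complex.cpow_ofNat_inv_pow (1 + α^2 * z^2) 2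
      rw [hsdef, one_div]
      exact_mod_cast h
    -- derivative of w = 1 + α² t²
    have hw : HasDerivAt (fun t : ℂ => 1 + α^2 * t^2) (α^2 * (2 * z)) z := by
      have h := ((hasDerivAt_pow 2 z).const_mul (α^2)).const_add 1
      simpa using h
    have hslit : (1 + α^2 * z^2) ∈ Complex.slitPlane := Or.inr hwim'.ne'
    -- derivative of s = w^{1/2}
    have hsd : HasDerivAt (fun t : ℂ => (1 + α^2 * t^2) ^ (1/2 : ℂ))
        ((1/2 : ℂ) * (1 + α^2 * z^2) ^ ((1/2 : ℂ) - 1) * (α^2 * (2 * z))) z :=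
      hw.cpow_const hslit
    have hpow : (1 + α^2 * z^2) ^ ((1/2 : ℂ) - 1) = s⁻¹ := by
      have h : ((1/2 : ℂ) - 1) = -(1/2 : ℂ) := by ring
      rw [h, Complex.cpow_neg, ← hsdef]
    rw [hpow] at hsd
    -- derivative of numerator α t
    have hnum : HasDerivAt (fun t : ℂ => α * t) α z := by
      simpa using (hasDerivAt_id z).const_mul α
    -- derivative of denominator 1 + s
    have hden : HasDerivAt (fun t : ℂ => 1 + (1 + α^2 * t^2) ^ (1/2 : ℂ))
        ((1/2 : ℂ) * s⁻¹ * (α^2 * (2 * z))) z := hsd.const_add 1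
    -- derivative of quotient
    have hquot : HasDerivAt (fun t : ℂ => α * t / (1 + (1 + α^2 * t^2) ^ (1/2 : ℂ)))
        ((α * (1 + s) - α * z * ((1/2 : ℂ) * s⁻¹ * (α^2 * (2 * z)))) / (1 + s)^2) z :=
      hnum.div hden h1s
    -- slit plane for the log argument
    have huslit : (α * z / (1 + s)) ∈ Complex.slitPlane := by
      left
      rw [Complex.div_re]
      have hzre : (α * z).re = α.re * r := by simp [hz]
      have hzim : (α * z).im = α.im * r := by simp [hz]
      have h1sre : (1 + s).re = 1 + s.re := by simp
      have h1sim : (1 + s).im = s.im := by simp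
      rw [hzre, hzim, h1sre, h1sim]
      have hn : 0 < Complex.normSq (1 + s) := Complex.normSq_pos.2 h1s
      have : 0 < α.re * r * (1 + s.re) + α.im * r * s.im := by positivity
      positivity
    have hlog : HasDerivAt (fun t : ℂ =>
        Complex.log (α * t / (1 + (1 + α^2 * t^2) ^ (1/2 : ℂ))))
        (((α * (1 + s) - α * z * ((1/2 : ℂ) * s⁻¹ * (α^2 * (2 * z)))) / (1 + s)^2)
          / (α * z / (1 + s))) z := hquot.clog huslit
    have htot := (hsd.add hlog).add_const γ
    have e1 : (1/2 : ℂ) * s⁻¹ * (α^2 * (2 * z)) = α^2 * z / s := by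
      field_simp
    have e2 : α * (1 + s) - α * z * (α^2 * z / s) = α * (1 + s) / s := by
      field_simp
      linear_combination hs2
    have hval : ((1/2 : ℂ) * s⁻¹ * (α^2 * (2 * z)) +
        ((α * (1 + s) - α * z * ((1/2 : ℂ) * s⁻¹ * (α^2 * (2 * z)))) / (1 + s)^2)
          / (α * z / (1 + s))) = s / z := by
      have hαz : α * z ≠ 0 := mul_ne_zero hα0 hr0
      have e3 : (α * (1 + s) / s) / (1 + s)^2 / (α * z / (1 + s)) = 1 / (s * z) := by
        field_simp
      rw [e1, e2, e3]
      field_simp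
      linear_combination (-1 : ℂ) * hs2
    rw [hval] at htot
    exact htot.comp_ofReal
  have hDre : ∀ r : ℝ, 0 < r → HasDerivAt (fun t : ℝ =>
      ((1 + α^2 * (t : ℂ)^2) ^ (1/2 : ℂ) +
        Complex.log ((α * (t : ℂ)) / (1 + (1 + α^2 * (t : ℂ)^2) ^ (1/2 : ℂ))) + γ).re)
      (((1 + α^2 * (r : ℂ)^2) ^ (1/2 : ℂ) / (r : ℂ)).re) r := by
    intro r hr
    exact Complex.reCLM.hasFDerivAt.comp_hasDerivAt r (hD r hr)
  constructor
  · apply monotoneOn_of_deriv_nonneg (convex_Ioi 0)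
    · intro r hr
      exact ((hDre r hr).continuousAt).continuousWithinAt
    · rw [interior_Ioi]
      intro r hr
      exact (hDre r hr).differentiableAt.differentiableWithinAt
    · rw [interior_Ioi]
      intro r hr
      rw [(hDre r hr).deriv]
      have h1 := (hs r hr).1
      rw [Complex.div_ofReal_re]
      exact div_nonneg h1.le (le_of_lt hr)
  · intro r hr
    have hsre := (hs r hr).1
    rw [one_div, Complex.inv_re]
    have h1 : ((r : ℂ) * (1 + α^2 * (r : ℂ)^2) ^ (1/2 : ℂ)).re
        = r * ((1 + α^2 * (r : ℂ)^2) ^ (1/2 : ℂ)).re := Complex.re_ofReal_mul _ _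
    rw [h1]
    exact div_nonneg (mul_nonneg hr.le hsre.le) (Complex.normSq_nonneg _)

/-- For fixed `b ≥ 0`, `μ = b + iω` with `ω` large, `ν ≥ 1`, `α = ν⁻¹μ^{1/2}`, and any
constant `γ ∈ ℂ`, the function `r ↦ Re ζ(αr)` with
`ζ(αr) = √(1+α²r²) + log(αr/(1+√(1+α²r²))) + γ` is nondecreasing on `(0,∞)`; in
particular `Re(1/(r√(1+α²r²))) ≥ 0` for all `r > 0`. -/
theorem stmt5 (b : ℝ) (hb : 0 ≤ b) :
    ∃ ω₀ : ℝ, 0 < ω₀ ∧ ∀ ω : ℝ, ω₀ ≤ ω → ∀ ν : ℝ, 1 ≤ ν → ∀ γ : ℂ,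
      (MonotoneOn (fun r : ℝ =>
        ((1 + ((ν : ℂ)⁻¹ * ((b : ℂ) + ω * Complex.I) ^ (1/2 : ℂ))^2 * (r : ℂ)^2) ^ (1/2 : ℂ) +
          Complex.log ((((ν : ℂ)⁻¹ * ((b : ℂ) + ω * Complex.I) ^ (1/2 : ℂ)) * (r : ℂ)) /
            (1 + (1 + ((ν : ℂ)⁻¹ * ((b : ℂ) + ω * Complex.I) ^ (1/2 : ℂ))^2 * (r : ℂ)^2)
              ^ (1/2 : ℂ))) + γ).re)
        (Set.Ioi 0)) ∧
      (∀ r : ℝ, 0 < r →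
        0 ≤ ((1 : ℂ) / ((r : ℂ) *
          (1 + ((ν : ℂ)⁻¹ * ((b : ℂ) + ω * Complex.I) ^ (1/2 : ℂ))^2 * (r : ℂ)^2)
            ^ (1/2 : ℂ))).re) := by
  refine ⟨1, one_pos, fun ω hω ν hν γ => ?_⟩
  have hμim : 0 < ((b : ℂ) + ω * Complex.I).im := by
    simp only [Complex.add_im, Complex.ofReal_im, Complex.mul_im, Complex.I_im,
      Complex.ofReal_re, Complex.I_re, Complex.ofReal_im]
    simp
    linarith
  obtain ⟨h1, h2⟩ := sqrt_pos_of_im_pos hμim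
  have hν0 : (0:ℝ) < ν⁻¹ := by positivity
  have hcast : (ν : ℂ)⁻¹ = ((ν⁻¹ : ℝ) : ℂ) := by push_cast; ring
  have hre : 0 < ((ν : ℂ)⁻¹ * ((b : ℂ) + ω * Complex.I) ^ (1/2 : ℂ)).re := by
    rw [hcast, Complex.re_ofReal_mul]
    positivity
  have him : 0 < ((ν : ℂ)⁻¹ * ((b : ℂ) + ω * Complex.I) ^ (1/2 : ℂ)).im := by
    rw [hcast, Complex.im_ofReal_mul]
    positivity
  exact key hre him γ
end

section
/- Let b ∈ ℝ be fixed and μ = b + iω. Define Q(y) = (2y² − 3y⁴ + 6α²/y² + 18 α² + α⁴/y⁴) / (4y²(1 + y² + α²/y²)²) with α = ν/μ. Then there exist ω₀ and C > 0 depending only on b such that |μ^{-1} Q(μ^{-1/2} r)| ≤ C r^{-2} for all r > 0, ω ≥ ω₀, and ν ≥ 0. -/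
open Complex

set_option maxHeartbeats 1000000

/-- For fixed `b ∈ ℝ`, `μ = b + iω`, `α = ν/μ`, the Liouville–Green potential
`Q(y) = (2y² − 3y⁴ + 6α²/y² + 18α² + α⁴/y⁴)/(4y²(1+y²+α²/y²)²)` satisfies
`|μ⁻¹ Q(μ^{-1/2}r)| ≤ C r⁻²` for all `r > 0`, `ω ≥ ω₀`, `ν ≥ 0`. -/
theorem stmt7 (b : ℝ) :
    ∃ ω₀ C : ℝ, 0 < ω₀ ∧ 0 < C ∧ ∀ ω : ℝ, ω₀ ≤ ω → ∀ ν : ℝ, 0 ≤ ν → ∀ r : ℝ, 0 < r →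
      let μ : ℂ := (b : ℂ) + ω * Complex.I
      let Y : ℂ := μ ^ (-(1/2) : ℂ) * (r : ℂ)
      let A : ℂ := (ν : ℂ) / μ
      ‖(μ⁻¹ *
        ((2*Y^2 - 3*Y^4 + 6*A^2/Y^2 + 18*A^2 + A^4/Y^4) /
          (4*Y^2*(1 + Y^2 + A^2/Y^2)^2)))‖ ≤ C / r^2 := by
  refine ⟨2*|b|+1, 6, by positivity, by norm_num, ?_⟩
  intro ω hω ν hν r hr μ Y A
  have hω0 : 0 < ω := lt_of_lt_of_le (by positivity) hω
  have hμval : μ = (b:ℂ) + ω*Complex.I := rfl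
  have hA : A = (ν:ℂ)/μ := rfl
  have hμ : μ ≠ 0 := by
    intro h
    have h2 : μ.im = 0 := by rw [h]; simp
    rw [hμval] at h2
    simp at h2
    linarith
  have hrC : (r:ℂ) ≠ 0 := by exact_mod_cast hr.ne'
  have hY2 : Y^2 = (r:ℂ)^2 / μ := by
    have h1 : (μ ^ (-(1/2) : ℂ))^2 = μ⁻¹ := by
      rw [sq, ← Complex.cpow_add _ _ hμ,
        show (-(1/2) + -(1/2) : ℂ) = -1 by norm_num, Complex.cpow_neg_one]
    show (μ ^ (-(1/2) : ℂ) * (r:ℂ))^2 = _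
    rw [mul_pow, h1]
    field_simp
  clear_value A Y μ
  set c : ℝ := r^2 + ν^2/r^2 with hc
  have hc0 : 0 < c := by positivity
  set X : ℂ := (r:ℂ)^2 / μ with hX
  set B : ℂ := (ν:ℂ)^2 / (μ * (r:ℂ)^2) with hB
  set D : ℂ := 1 + X + B with hD
  set m : ℝ := ‖μ‖ with hm
  clear_value X B D
  have hm0 : 0 < m := norm_pos_iff.mpr hμ
  have hmsq : m^2 = b^2 + ω^2 := by
    rw [hm, Complex.sq_norm, hμval]
    simp [Complex.normSq_add_mul_I]
  have hnum : (((b+c : ℝ):ℂ) + (ω:ℂ)*Complex.I) = μ + (c:ℂ) := by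
    rw [hμval, hc]
    push_cast
    ring
  have hDval : D = (((b+c : ℝ):ℂ) + (ω:ℂ)*Complex.I)/μ := by
    rw [hD, hX, hB, hnum, hc]
    push_cast
    field_simp
    ring
  have habsD : (‖D‖)^2 = ((b+c)^2 + ω^2)/(b^2+ω^2) := by
    rw [hDval, norm_div, div_pow, Complex.sq_norm, Complex.sq_norm, hμval]
    have h5 : ((b+c : ℝ):ℂ) + (ω:ℂ)*Complex.I = ((b+c : ℝ):ℂ) + ((ω:ℝ):ℂ)*Complex.I := by
      norm_num
    rw [h5, Complex.normSq_add_mul_I]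
    simp [Complex.normSq_add_mul_I]
  have hd2 : (0:ℝ) < b^2 + ω^2 := by positivity
  have hb2 : 4*b^2 ≤ ω^2 := by nlinarith [_root_.sq_abs b, abs_nonneg b]
  have hbc : 0 ≤ c*(b+|b|) := mul_nonneg hc0.le (by linarith [neg_abs_le b])
  have key : 0 ≤ b^2 + 4*b*c + c^2 + ω^2 := by
    nlinarith [sq_nonneg (c - 2*|b|), _root_.sq_abs b, hbc]
  have hDen : (1/2)*(1 + (c/m)^2) ≤ (‖D‖)^2 := by
    rw [habsD, div_pow, hmsq, ← sub_nonneg]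
    have heq : ((b+c)^2 + ω^2)/(b^2+ω^2) - (1/2)*(1 + c^2/(b^2+ω^2))
        = (b^2 + 4*b*c + c^2 + ω^2)/(2*(b^2+ω^2)) := by
      field_simp
      ring
    rw [heq]
    positivity
  have hDpos : 0 < (‖D‖)^2 := lt_of_lt_of_le (by positivity) hDen
  have hD0 : D ≠ 0 := by
    intro h
    rw [h] at hDpos
    simp at hDpos
  have hμX : μ * X = (r:ℂ)^2 := by
    rw [hX]; field_simp
  have hX0 : X ≠ 0 := by
    rw [hX]
    exact div_ne_zero (pow_ne_zero 2 hrC) hμ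
  have hfac : 1 + Y^2 + A^2/Y^2 = D := by
    rw [hY2, hA, hD, hX, hB]
    field_simp
  have hY4 : Y^4 = X^2 := by
    rw [show Y^4 = (Y^2)^2 by ring, hY2]
  have hE : μ⁻¹ * ((2*Y^2 - 3*Y^4 + 6*A^2/Y^2 + 18*A^2 + A^4/Y^4) /
        (4*Y^2*(1 + Y^2 + A^2/Y^2)^2))
      = (2*X - 3*X^2 + 6*B + 18*(X*B) + B^2) / ((r:ℂ)^2 * (4*D^2)) := by
    have hA2 : A^2 = X*B := by
      rw [hA, hX, hB]
      field_simp
    rw [hfac, hY2, hY4]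
    have hnum' : 2*X - 3*X^2 + 6*A^2/X + 18*A^2 + A^4/X^2
        = 2*X - 3*X^2 + 6*B + 18*(X*B) + B^2 := by
      rw [show A^4 = (A^2)^2 by ring, hA2]
      field_simp
    rw [hnum']
    have hden : (r:ℂ)^2 * (4*D^2) = μ*(4*X*D^2) := by rw [← hμX]; ring
    rw [hden]
    ring
  set u : ℝ := ‖X‖ with hu
  set v : ℝ := ‖B‖ with hv
  have hu0 : 0 ≤ u := norm_nonneg X
  have hv0 : 0 ≤ v := norm_nonneg B
  have huval : u = r^2/m := by
    simp [hu, hX, norm_div, norm_pow, Complex.norm_real, Real.norm_eq_abs, abs_of_pos hr, hm]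
  have hvval : v = ν^2/(m*r^2) := by
    simp [hv, hB, norm_div, norm_mul, norm_pow, Complex.norm_real, Real.norm_eq_abs, abs_of_pos hr,
      _root_.abs_of_nonneg hν, hm]
  have huv : u + v = c/m := by
    rw [huval, hvval, hc]
    field_simp
  have hEabs : ‖μ⁻¹ * ((2*Y^2 - 3*Y^4 + 6*A^2/Y^2 + 18*A^2 + A^4/Y^4) /
        (4*Y^2*(1 + Y^2 + A^2/Y^2)^2))‖
      = ‖2*X - 3*X^2 + 6*B + 18*(X*B) + B^2‖ / (r^2 * (4*(‖D‖)^2)) := by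
    rw [hE, norm_div, norm_mul, norm_mul, norm_pow, norm_pow, Complex.norm_real, Real.norm_eq_abs,
      abs_of_pos hr, Complex.norm_ofNat]
  have hNabs : ‖2*X - 3*X^2 + 6*B + 18*(X*B) + B^2‖
      ≤ 2*u + 3*u^2 + 6*v + 18*(u*v) + v^2 := by
    have e1 : ‖2*X‖ = 2*u := by
      rw [norm_mul, hu]; norm_num
    have e2 : ‖3*X^2‖ = 3*u^2 := by
      rw [norm_mul, norm_pow, hu]; norm_num
    have e3 : ‖6*B‖ = 6*v := by
      rw [norm_mul, hv]; norm_num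
    have e4 : ‖18*(X*B)‖ = 18*(u*v) := by
      rw [norm_mul, norm_mul, hu, hv]; norm_num
    have e5 : ‖B^2‖ = v^2 := by
      rw [norm_pow, hv]
    calc ‖2*X - 3*X^2 + 6*B + 18*(X*B) + B^2‖
        ≤ ‖2*X - 3*X^2 + 6*B + 18*(X*B)‖ + ‖B^2‖ :=
          norm_add_le _ _
      _ ≤ (‖2*X - 3*X^2 + 6*B‖ + ‖18*(X*B)‖) + ‖B^2‖ := by
          gcongr <;> exact norm_add_le _ _
      _ ≤ ((‖2*X - 3*X^2‖ + ‖6*B‖) + ‖18*(X*B)‖)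
            + ‖B^2‖ := by
          gcongr <;> exact norm_add_le _ _
      _ ≤ (((‖2*X‖ + ‖3*X^2‖) + ‖6*B‖)
            + ‖18*(X*B)‖) + ‖B^2‖ := by
          gcongr
          exact norm_sub_le _ _
      _ = 2*u + 3*u^2 + 6*v + 18*(u*v) + v^2 := by
          rw [e1, e2, e3, e4, e5]; try ring
  have hNbound : ‖2*X - 3*X^2 + 6*B + 18*(X*B) + B^2‖ ≤ 12*(1 + (c/m)^2) := by
    calc ‖2*X - 3*X^2 + 6*B + 18*(X*B) + B^2‖
        ≤ 2*u + 3*u^2 + 6*v + 18*(u*v) + v^2 := hNabs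
      _ ≤ 12*(1 + (u+v)^2) := by
          nlinarith [sq_nonneg (3*u-1), sq_nonneg (3*v-1), mul_nonneg hu0 hv0]
      _ = 12*(1 + (c/m)^2) := by rw [huv]
  have hone : (0:ℝ) < 1 + (c/m)^2 := by positivity
  calc ‖μ⁻¹ * ((2*Y^2 - 3*Y^4 + 6*A^2/Y^2 + 18*A^2 + A^4/Y^4) /
        (4*Y^2*(1 + Y^2 + A^2/Y^2)^2))‖
      = ‖2*X - 3*X^2 + 6*B + 18*(X*B) + B^2‖ / (r^2 * (4*(‖D‖)^2)) :=
        hEabs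
    _ ≤ (12*(1 + (c/m)^2)) / (r^2 * (4*((1/2)*(1 + (c/m)^2)))) := by
        apply div_le_div₀ (by positivity) hNbound (by positivity)
        gcongr
    _ = 6 / r^2 := by
        field_simp
        ring
end

section
/- Let X be a Banach space of functions on (a,∞), let g ∈ L^∞(a,∞), and let K: {(x,y): a < x ≤ y} → ℂ be measurable with m₀ := ∫_a^∞ sup_{x ∈ (a,y)} |K(x,y)| dy < ∞. Then the Volterra integral equation f(x) = g(x) + ∫_x^∞ K(x,y) f(y) dy has a solution f ∈ L^∞(a,∞) with ‖f‖_∞ ≤ ‖g‖_∞ e^{m₀}; moreover |f(x) − g(x)| ≤ ‖g‖_∞ e^{m₀} ∫_x^∞ sup_{x' ∈ (a,y)}|K(x',y)| dy for a.e. x > a. -/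
open MeasureTheory Set Filter Topology

namespace Stmt8

noncomputable def Mf (a : ℝ) (K : ℝ → ℝ → ℂ) (y : ℝ) : ℝ :=
  sSup ((fun x => ‖K x y‖) '' Ioo a y)

noncomputable def Ff (a : ℝ) (K : ℝ → ℝ → ℂ) (x : ℝ) : ℝ :=
  ∫ y in Ioi x, Mf a K y

variable {a : ℝ} {K : ℝ → ℝ → ℂ}


lemma Mf_nonneg (y : ℝ) : 0 ≤ Mf a K y :=
  Real.sSup_nonneg (by rintro z ⟨x, -, rfl⟩; exact norm_nonneg _)

lemma Mf_zero {y : ℝ} (h : y ≤ a) : Mf a K y = 0 := by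
  simp [Mf, Ioo_eq_empty (not_lt.mpr h), Real.sSup_empty]

lemma norm_K_le (hbdd : ∀ y, BddAbove ((fun x => ‖K x y‖) '' Ioo a y))
    {x y : ℝ} (hx : a < x) (hxy : x < y) : ‖K x y‖ ≤ Mf a K y :=
  le_csSup (hbdd y) ⟨x, ⟨hx, hxy⟩, rfl⟩

lemma Mf_integrable (hint : IntegrableOn (Mf a K) (Ioi a)) : Integrable (Mf a K) := by
  rw [← integrableOn_univ, ← Iic_union_Ioi (a := a)]
  refine IntegrableOn.union ?_ hint
  exact (integrableOn_zero).congr_fun (fun y hy => (Mf_zero hy).symm) measurableSet_Iic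

lemma Ff_antitone (hM : Integrable (Mf a K)) : Antitone (Ff a K) := by
  intro x x' h
  exact setIntegral_mono_set hM.integrableOn
    (Eventually.of_forall fun y => Mf_nonneg y)
    (HasSubset.Subset.eventuallyLE (Ioi_subset_Ioi h))

lemma Ff_nonneg (x : ℝ) : 0 ≤ Ff a K x :=
  integral_nonneg fun y => Mf_nonneg y

lemma Ff_le (hM : Integrable (Mf a K)) (x : ℝ) : Ff a K x ≤ Ff a K a := by
  have h1 : Ff a K x = Ff a K (max x a) := by
    unfold Ff
    have : ∀ y, Mf a K y = (Ioi a).indicator (Mf a K) y := by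
      intro y
      by_cases hy : a < y
      · rw [indicator_of_mem (by exact hy)]
      · rw [indicator_of_notMem (by exact hy), Mf_zero (not_lt.mp hy)]
    rw [show (fun y => Mf a K y) = (Ioi a).indicator (Mf a K) from funext this]
    rw [setIntegral_indicator measurableSet_Ioi, setIntegral_indicator measurableSet_Ioi,
      Ioi_inter_Ioi, Ioi_inter_Ioi]
    congr 1
    rw [sup_assoc, sup_idem]
  rw [h1]
  exact Ff_antitone hM (le_max_right x a)

lemma Ff_measurable (hM : Integrable (Mf a K)) : Measurable (Ff a K) :=
  (Ff_antitone hM).measurable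

lemma MFn_integrable (hM : Integrable (Mf a K)) (n : ℕ) :
    Integrable (fun y => Mf a K y * Ff a K y ^ n) := by
  have : Integrable (fun y => Ff a K y ^ n * Mf a K y) := by
    refine hM.bdd_mul (c := Ff a K a ^ n) ((Ff_measurable hM).pow_const n).aestronglyMeasurable
      (ae_of_all _ fun y => ?_)
    rw [Real.norm_of_nonneg (pow_nonneg (Ff_nonneg y) n)]
    exact pow_le_pow_left₀ (Ff_nonneg y) (Ff_le hM y) n
  simpa [mul_comm] using this

lemma key (hM : Integrable (Mf a K)) :
    ∀ (n : ℕ) (x : ℝ), ∫ y in Ioi x, Mf a K y * Ff a K y ^ n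
      = Ff a K x ^ (n + 1) / ((n : ℝ) + 1) := by
  intro n
  induction n with
  | zero => intro x; simp [Ff]
  | succ n ih =>
    intro x
    have hMnn : ∀ y, 0 ≤ Mf a K y := fun y => Mf_nonneg y
    have hFnn : ∀ x, 0 ≤ Ff a K x := fun x => Ff_nonneg x
    have hFle := Ff_le hM
    have hAint : Integrable (fun y => Mf a K y * Ff a K y ^ n) := MFn_integrable hM n
    have hA1int : Integrable (fun y => Mf a K y * Ff a K y ^ (n + 1)) := MFn_integrable hM (n + 1)
    set H : ℝ × ℝ → ℝ := fun p =>
      {q : ℝ × ℝ | q.1 < q.2}.indicator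
        (fun q => (Ioi x).indicator (fun y => Mf a K y * Ff a K y ^ n) q.1 * Mf a K q.2) p with hH
    have hHp : ∀ p : ℝ × ℝ, H p = {q : ℝ × ℝ | q.1 < q.2}.indicator
        (fun q => (Ioi x).indicator (fun y => Mf a K y * Ff a K y ^ n) q.1 * Mf a K q.2) p :=
      fun _ => rfl
    -- measurability
    have hHae : AEStronglyMeasurable H (volume.prod volume) := by
      apply AEStronglyMeasurable.indicator _ (measurableSet_lt measurable_fst measurable_snd)
      exact ((hAint.1.indicator measurableSet_Ioi).comp_fst).mul hM.1.comp_snd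
    -- pointwise bound
    have hbd : ∀ p : ℝ × ℝ, ‖H p‖ ≤ (Mf a K p.1 * Ff a K a ^ n) * Mf a K p.2 := by
      intro p
      have h0 : 0 ≤ (Mf a K p.1 * Ff a K a ^ n) * Mf a K p.2 :=
        mul_nonneg (mul_nonneg (hMnn _) (pow_nonneg (hFnn _) n)) (hMnn _)
      rw [hHp p]
      by_cases hp : p ∈ {q : ℝ × ℝ | q.1 < q.2}
      · rw [indicator_of_mem hp]
        by_cases h1 : p.1 ∈ Ioi x
        · rw [indicator_of_mem h1,
            Real.norm_of_nonneg (mul_nonneg (mul_nonneg (hMnn _) (pow_nonneg (hFnn _) n)) (hMnn _))]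
          exact mul_le_mul_of_nonneg_right
            (mul_le_mul_of_nonneg_left (pow_le_pow_left₀ (hFnn _) (hFle _) n) (hMnn _)) (hMnn _)
        · rw [indicator_of_notMem h1]; simpa using h0
      · rw [indicator_of_notMem hp]; simpa using h0
    have hHint : Integrable H (volume.prod volume) :=
      Integrable.mono' ((hM.mul_const _).mul_prod hM) hHae (ae_of_all _ hbd)
    -- unswapped iterated integral
    have hB : (∫ y, ∫ t, H (y, t)) = ∫ y in Ioi x, Mf a K y * Ff a K y ^ (n + 1) := by
      have h1 : ∀ y, (∫ t, H (y, t))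
          = (Ioi x).indicator (fun y => Mf a K y * Ff a K y ^ (n + 1)) y := by
        intro y
        have e1 : (fun t => H (y, t))
            = fun t => (Ioi x).indicator (fun y => Mf a K y * Ff a K y ^ n) y
                * (Ioi y).indicator (Mf a K) t := by
          funext t
          rw [hHp (y, t)]
          by_cases ht : y < t
          · rw [indicator_of_mem (show (y, t) ∈ {q : ℝ × ℝ | q.1 < q.2} from ht),
              indicator_of_mem (show t ∈ Ioi y from ht)]
          · rw [indicator_of_notMem (show (y, t) ∉ {q : ℝ × ℝ | q.1 < q.2} from ht),
              indicator_of_notMem (show t ∉ Ioi y from ht), mul_zero]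
        rw [e1]
        rw [integral_const_mul, integral_indicator measurableSet_Ioi]
        by_cases hy : y ∈ Ioi x
        · rw [indicator_of_mem hy, indicator_of_mem hy]
          show Mf a K y * Ff a K y ^ n * Ff a K y = _
          ring
        · rw [indicator_of_notMem hy, indicator_of_notMem hy, zero_mul]
      rw [funext h1, integral_indicator measurableSet_Ioi]
    -- swapped iterated integral
    have h2 : ∀ t, (∫ y, H (y, t))
        = (Ioi x).indicator (fun t =>
            (Ff a K x ^ (n + 1) / ((n : ℝ) + 1) - Ff a K t ^ (n + 1) / ((n : ℝ) + 1))
              * Mf a K t) t := by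
      intro t
      have e1 : (fun y => H (y, t))
          = fun y => (Ioo x t).indicator (fun y => Mf a K y * Ff a K y ^ n) y * Mf a K t := by
        funext y
        rw [hHp (y, t)]
        simp only [Set.indicator_apply, mem_setOf_eq, mem_Ioi, mem_Ioo]
        by_cases h1 : y < t <;> by_cases h2 : x < y <;> simp [h1, h2]
      rw [e1, integral_mul_const, integral_indicator measurableSet_Ioo]
      by_cases hxt : x < t
      · have hu : Ioo x t ∪ Ici t = Ioi x := Ioo_union_Ici_eq_Ioi hxt
        have hd : Disjoint (Ioo x t) (Ici t) := by
          refine disjoint_left.mpr ?_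
          rintro y ⟨-, h2⟩ h3
          exact absurd h3 (not_le.mpr h2)
        have hsum := setIntegral_union hd measurableSet_Ici
          (hAint.integrableOn (s := Ioo x t)) (hAint.integrableOn (s := Ici t))
        rw [hu, ih x, integral_Ici_eq_integral_Ioi, ih t] at hsum
        rw [indicator_of_mem (show t ∈ Ioi x from hxt)]
        have : ∫ y in Ioo x t, Mf a K y * Ff a K y ^ n
            = Ff a K x ^ (n + 1) / ((n : ℝ) + 1) - Ff a K t ^ (n + 1) / ((n : ℝ) + 1) := by
          linarith
        rw [this]
      · rw [indicator_of_notMem (show t ∉ Ioi x from hxt), Ioo_eq_empty hxt]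
        simp
    have hC : (∫ t, ∫ y, H (y, t))
        = Ff a K x ^ (n + 1) / ((n : ℝ) + 1) * Ff a K x
          - (1 / ((n : ℝ) + 1)) * ∫ t in Ioi x, Mf a K t * Ff a K t ^ (n + 1) := by
      rw [funext h2, integral_indicator measurableSet_Ioi]
      have e2 : ∀ t, (Ff a K x ^ (n + 1) / ((n : ℝ) + 1) - Ff a K t ^ (n + 1) / ((n : ℝ) + 1))
            * Mf a K t
          = Ff a K x ^ (n + 1) / ((n : ℝ) + 1) * Mf a K t
            - (1 / ((n : ℝ) + 1)) * (Mf a K t * Ff a K t ^ (n + 1)) := by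
        intro t; ring
      simp_rw [e2]
      rw [integral_sub ((hM.integrableOn).const_mul _) ((hA1int.integrableOn).const_mul _),
        integral_const_mul, integral_const_mul]
      rfl
    have hswap : (∫ y, ∫ t, H (y, t)) = ∫ t, ∫ y, H (y, t) :=
      integral_integral_swap (by exact hHint)
    have heq : (∫ y in Ioi x, Mf a K y * Ff a K y ^ (n + 1))
        = Ff a K x ^ (n + 1) / ((n : ℝ) + 1) * Ff a K x
          - (1 / ((n : ℝ) + 1)) * ∫ t in Ioi x, Mf a K t * Ff a K t ^ (n + 1) :=
      hB.symm.trans (hswap.trans hC)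
    have hn : ((n : ℝ) + 1) ≠ 0 := by positivity
    have hn2 : ((n : ℝ) + 1 + 1) ≠ 0 := by positivity
    set J : ℝ := ∫ y in Ioi x, Mf a K y * Ff a K y ^ (n + 1) with hJdef
    have e : ∀ A B C : ℝ, ((n : ℝ) + 1) * (A / ((n : ℝ) + 1) * B - 1 / ((n : ℝ) + 1) * C)
        = A * B - C := by
      intro A B C; field_simp
    have heq' : ((n : ℝ) + 1) * J = Ff a K x ^ (n + 1) * Ff a K x - J := by
      conv_lhs => rw [heq]
      exact e _ _ _
    push_cast
    rw [eq_div_iff hn2]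
    linear_combination heq'

section Iter


variable {a : ℝ} {g : ℝ → ℂ} {K : ℝ → ℝ → ℂ} {Cg : ℝ}

noncomputable def u (a : ℝ) (g : ℝ → ℂ) (K : ℝ → ℝ → ℂ) : ℕ → ℝ → ℂ
  | 0 => g
  | n + 1 => fun x => ∫ y in Ioi x, K x y * u a g K n y

lemma u_measurable (hgm : Measurable g) (hKm : Measurable (Function.uncurry K)) :
    ∀ n, Measurable (u a g K n) := by
  intro n
  induction n with
  | zero => exact hgm
  | succ n ih =>
    have hw : StronglyMeasurable fun p : ℝ × ℝ =>
        ({q : ℝ × ℝ | q.1 < q.2}.indicator (fun q => K q.1 q.2 * u a g K n q.2)) p := by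
      refine (Measurable.indicator ?_ (measurableSet_lt measurable_fst measurable_snd)).stronglyMeasurable
      exact hKm.mul (ih.comp measurable_snd)
    have he : u a g K (n + 1) = fun x => ∫ y,
        ({q : ℝ × ℝ | q.1 < q.2}.indicator (fun q => K q.1 q.2 * u a g K n q.2)) (x, y) := by
      funext x
      show (∫ y in Ioi x, K x y * u a g K n y) = _
      have hptw : ∀ y, (Ioi x).indicator (fun y => K x y * u a g K n y) y
          = {q : ℝ × ℝ | q.1 < q.2}.indicator (fun q => K q.1 q.2 * u a g K n q.2) (x, y) := by
        intro y
        by_cases h : x < y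
        · rw [indicator_of_mem (show y ∈ Ioi x from h),
            indicator_of_mem (show (x, y) ∈ {q : ℝ × ℝ | q.1 < q.2} from h)]
        · rw [indicator_of_notMem (show y ∉ Ioi x from h),
            indicator_of_notMem (show (x, y) ∉ {q : ℝ × ℝ | q.1 < q.2} from h)]
      rw [← integral_indicator measurableSet_Ioi]
      exact integral_congr_ae (ae_of_all _ hptw)
    rw [he]
    exact hw.integral_prod_right'.measurable

lemma u_bound (hM : Integrable (Mf a K)) (hCg : 0 ≤ Cg)
    (hbdd : ∀ y, BddAbove ((fun x => ‖K x y‖) '' Ioo a y))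
    (hg : ∀ x, a < x → ‖g x‖ ≤ Cg) :
    ∀ n, ∀ x, a < x → ‖u a g K n x‖ ≤ Cg * Ff a K x ^ n / n.factorial := by
  intro n
  induction n with
  | zero => intro x hx; simpa [u] using hg x hx
  | succ n ih =>
    intro x hx
    have hb : ‖∫ y in Ioi x, K x y * u a g K n y‖
        ≤ ∫ y in Ioi x, (Cg / n.factorial) * (Mf a K y * Ff a K y ^ n) := by
      refine norm_integral_le_of_norm_le (((MFn_integrable hM n).integrableOn).const_mul _) ?_
      refine (ae_restrict_iff' measurableSet_Ioi).2 (ae_of_all _ fun y hy => ?_)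
      rw [norm_mul]
      calc ‖K x y‖ * ‖u a g K n y‖
          ≤ Mf a K y * (Cg * Ff a K y ^ n / n.factorial) := by
            refine mul_le_mul (norm_K_le hbdd hx hy) (ih y (hx.trans hy)) (norm_nonneg _)
              (Mf_nonneg y)
        _ = Cg / n.factorial * (Mf a K y * Ff a K y ^ n) := by ring
    refine hb.trans ?_
    rw [integral_const_mul, key hM n x]
    rw [show ((n + 1 : ℕ).factorial : ℝ) = ((n : ℝ) + 1) * (n.factorial : ℝ) by
      push_cast [Nat.factorial_succ]; ring]
    have h1 : (0 : ℝ) < n.factorial := by positivity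
    have h2 : (0 : ℝ) < (n : ℝ) + 1 := by positivity
    apply le_of_eq
    rw [mul_div_assoc', div_mul_eq_mul_div, div_div, mul_comm ((n : ℝ) + 1)]

lemma u_term_integrable (hM : Integrable (Mf a K)) (hCg : 0 ≤ Cg)
    (hbdd : ∀ y, BddAbove ((fun x => ‖K x y‖) '' Ioo a y))
    (hg : ∀ x, a < x → ‖g x‖ ≤ Cg)
    (hgm : Measurable g) (hKm : Measurable (Function.uncurry K))
    (n : ℕ) {x : ℝ} (hx : a < x) :
    IntegrableOn (fun y => K x y * u a g K n y) (Ioi x) := by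
  refine Integrable.mono' ((hM.integrableOn).const_mul (Cg * Ff a K a ^ n / n.factorial))
    (((hKm.comp measurable_prodMk_left).mul (u_measurable hgm hKm n)).aestronglyMeasurable.restrict)
    ((ae_restrict_iff' measurableSet_Ioi).2 (ae_of_all _ fun y hy => ?_))
  have h1 : (0 : ℝ) < n.factorial := by positivity
  rw [norm_mul]
  calc ‖K x y‖ * ‖u a g K n y‖
      ≤ Mf a K y * (Cg * Ff a K y ^ n / n.factorial) :=
        mul_le_mul (norm_K_le hbdd hx hy) (u_bound hM hCg hbdd hg n y (hx.trans hy))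
          (norm_nonneg _) (Mf_nonneg y)
    _ ≤ Mf a K y * (Cg * Ff a K a ^ n / n.factorial) := by
        refine mul_le_mul_of_nonneg_left ((div_le_div_iff_of_pos_right h1).2
          (mul_le_mul_of_nonneg_left (pow_le_pow_left₀ (Ff_nonneg y) (Ff_le hM y) n) hCg))
          (Mf_nonneg y)
    _ = Cg * Ff a K a ^ n / n.factorial * Mf a K y := mul_comm _ _

lemma u_term_norm_integral_le (hM : Integrable (Mf a K)) (hCg : 0 ≤ Cg)
    (hbdd : ∀ y, BddAbove ((fun x => ‖K x y‖) '' Ioo a y))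
    (hg : ∀ x, a < x → ‖g x‖ ≤ Cg)
    (hgm : Measurable g) (hKm : Measurable (Function.uncurry K))
    (n : ℕ) {x : ℝ} (hx : a < x) :
    ∫ y in Ioi x, ‖K x y * u a g K n y‖ ≤ Cg * (Ff a K a ^ n / n.factorial) * Ff a K a := by
  have h1 : (0 : ℝ) < n.factorial := by positivity
  have hb : ∫ y in Ioi x, ‖K x y * u a g K n y‖
      ≤ ∫ y in Ioi x, Cg * Ff a K a ^ n / n.factorial * Mf a K y := by
    refine integral_mono_of_nonneg (ae_of_all _ fun y => norm_nonneg _)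
      ((hM.integrableOn).const_mul _)
      ((ae_restrict_iff' measurableSet_Ioi).2 (ae_of_all _ fun y hy => ?_))
    show ‖K x y * u a g K n y‖ ≤ Cg * Ff a K a ^ n / n.factorial * Mf a K y
    rw [norm_mul]
    calc ‖K x y‖ * ‖u a g K n y‖
        ≤ Mf a K y * (Cg * Ff a K y ^ n / n.factorial) :=
          mul_le_mul (norm_K_le hbdd hx hy) (u_bound hM hCg hbdd hg n y (hx.trans hy))
            (norm_nonneg _) (Mf_nonneg y)
      _ ≤ Mf a K y * (Cg * Ff a K a ^ n / n.factorial) := by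
          refine mul_le_mul_of_nonneg_left ((div_le_div_iff_of_pos_right h1).2
            (mul_le_mul_of_nonneg_left (pow_le_pow_left₀ (Ff_nonneg y) (Ff_le hM y) n) hCg))
            (Mf_nonneg y)
      _ = Cg * Ff a K a ^ n / n.factorial * Mf a K y := mul_comm _ _
  refine hb.trans ?_
  rw [integral_const_mul]
  have : (∫ y in Ioi x, Mf a K y) ≤ Ff a K a := Ff_le hM x
  calc Cg * Ff a K a ^ n / n.factorial * ∫ y in Ioi x, Mf a K y
      ≤ Cg * Ff a K a ^ n / n.factorial * Ff a K a := by
        exact mul_le_mul_of_nonneg_left this (div_nonneg (mul_nonneg hCg (pow_nonneg (Ff_nonneg a) n)) h1.le)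
    _ = Cg * (Ff a K a ^ n / n.factorial) * Ff a K a := by ring


end Iter

end Stmt8

open Stmt8 in
/-- Standard Volterra iteration: if `g` is bounded on `(a,∞)` by `Cg` and
`m₀ = ∫_a^∞ sup_{x∈(a,y)} |K(x,y)| dy < ∞`, then the equation
`f(x) = g(x) + ∫_x^∞ K(x,y)f(y) dy` has a bounded solution with
`‖f‖_∞ ≤ Cg e^{m₀}` and `|f(x) − g(x)| ≤ Cg e^{m₀} ∫_x^∞ sup_{x'∈(a,y)}|K(x',y)| dy`. -/
theorem stmt8 (a : ℝ) (g : ℝ → ℂ) (K : ℝ → ℝ → ℂ) (Cg : ℝ)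
    (hg : ∀ x, a < x → ‖g x‖ ≤ Cg)
    (hgm : Measurable g) (hKm : Measurable (Function.uncurry K))
    (hbdd : ∀ y, BddAbove ((fun x => ‖K x y‖) '' Ioo a y))
    (hint : IntegrableOn (fun y => sSup ((fun x => ‖K x y‖) '' Ioo a y)) (Ioi a)) :
    ∃ f : ℝ → ℂ, Measurable f ∧
      (∀ x, a < x →
        ‖f x‖ ≤ Cg * Real.exp (∫ y in Ioi a, sSup ((fun x' => ‖K x' y‖) '' Ioo a y))) ∧
      (∀ x, a < x → f x = g x + ∫ y in Ioi x, K x y * f y) ∧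
      (∀ x, a < x → ‖f x - g x‖ ≤
        Cg * Real.exp (∫ y in Ioi a, sSup ((fun x' => ‖K x' y‖) '' Ioo a y)) *
          ∫ y in Ioi x, sSup ((fun x' => ‖K x' y‖) '' Ioo a y)) := by
  classical
  have hM : Integrable (Mf a K) := Mf_integrable hint
  have hCg : 0 ≤ Cg := le_trans (norm_nonneg (g (a + 1))) (hg (a + 1) (by linarith))
  set v : ℕ → ℝ → ℂ := fun n => (Ioi a).indicator (u a g K n) with hv
  have hvm : ∀ n, Measurable (v n) := fun n =>
    (u_measurable hgm hKm n).indicator measurableSet_Ioi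
  have hub := u_bound hM hCg hbdd hg
  have h1 : ∀ n : ℕ, (0 : ℝ) < n.factorial := fun n => by positivity
  have hvb : ∀ n x, ‖v n x‖ ≤ Cg * (Ff a K a ^ n / n.factorial) := by
    intro n x
    by_cases hx : x ∈ Ioi a
    · rw [hv]
      simp only
      rw [indicator_of_mem hx]
      refine (hub n x hx).trans ?_
      rw [← mul_div_assoc]
      exact (div_le_div_iff_of_pos_right (h1 n)).2
        (mul_le_mul_of_nonneg_left (pow_le_pow_left₀ (Ff_nonneg x) (Ff_le hM x) n) hCg)
    · rw [hv]
      simp only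
      rw [indicator_of_notMem hx, norm_zero]
      exact mul_nonneg hCg (div_nonneg (pow_nonneg (Ff_nonneg a) n) (h1 n).le)
  have hsumb : Summable fun n : ℕ => Cg * (Ff a K a ^ n / n.factorial) :=
    (Real.summable_pow_div_factorial (Ff a K a)).mul_left Cg
  have hsum : ∀ x, Summable fun n => v n x := fun x =>
    Summable.of_norm_bounded hsumb (fun n => hvb n x)
  set f : ℝ → ℂ := fun x => ∑' n, v n x with hf
  have hfm : Measurable f := by
    refine measurable_of_tendsto_metrizable' atTop
      (f := fun N x => ∑ n ∈ Finset.range N, v n x)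
      (fun N => Finset.measurable_sum _ fun n _ => hvm n) ?_
    rw [tendsto_pi_nhds]
    exact fun x => (hsum x).hasSum.tendsto_sum_nat
  have hfeq : ∀ x, a < x → f x = ∑' n, u a g K n x := fun x hx =>
    tsum_congr fun n => indicator_of_mem hx _
  have hexp : ∑' n : ℕ, (Ff a K a ^ n / n.factorial : ℝ) = Real.exp (Ff a K a) := by
    rw [Real.exp_eq_exp_ℝ, NormedSpace.exp_eq_tsum_div]
  have hfb : ∀ x, a < x → ‖f x‖ ≤ Cg * Real.exp (Ff a K a) := by
    intro x hx
    have hsn : Summable fun n => ‖v n x‖ :=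
      Summable.of_nonneg_of_le (fun n => norm_nonneg _) (fun n => hvb n x) hsumb
    have h2 : ‖f x‖ ≤ ∑' n, (Cg * (Ff a K a ^ n / n.factorial)) :=
      (norm_tsum_le_tsum_norm hsn).trans (hsn.tsum_le_tsum (fun n => hvb n x) hsumb)
    rw [tsum_mul_left, hexp] at h2
    exact h2
  have heqn : ∀ x, a < x → f x = g x + ∫ y in Ioi x, K x y * f y := by
    intro x hx
    have hti : ∀ n, IntegrableOn (fun y => K x y * u a g K n y) (Ioi x) :=
      fun n => u_term_integrable hM hCg hbdd hg hgm hKm n hx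
    have hsum2 : Summable fun n => ∫ y in Ioi x, ‖K x y * u a g K n y‖ :=
      Summable.of_nonneg_of_le (fun n => integral_nonneg fun y => norm_nonneg _)
        (fun n => u_term_norm_integral_le hM hCg hbdd hg hgm hKm n hx)
        (hsumb.mul_right (Ff a K a))
    have hs : ∫ y in Ioi x, K x y * f y = ∫ y in Ioi x, ∑' n, K x y * u a g K n y := by
      refine setIntegral_congr_fun measurableSet_Ioi fun y hy => ?_
      rw [hfeq y (hx.trans hy)]
      exact tsum_mul_left.symm
    have hs2 : ∫ y in Ioi x, (∑' n, K x y * u a g K n y) = ∑' n, ∫ y in Ioi x, K x y * u a g K n y :=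
      (integral_tsum_of_summable_integral_norm hti hsum2).symm
    have hsummu : Summable fun n => u a g K n x :=
      (hsum x).congr fun n => indicator_of_mem hx _
    rw [hfeq x hx, Summable.tsum_eq_zero_add hsummu, hs, hs2]
    rfl
  have hdiff : ∀ x, a < x → ‖f x - g x‖
      ≤ Cg * Real.exp (Ff a K a) * ∫ y in Ioi x, Mf a K y := by
    intro x hx
    have h0 : f x - g x = ∫ y in Ioi x, K x y * f y := by rw [heqn x hx]; ring
    rw [h0]
    have h3 : ‖∫ y in Ioi x, K x y * f y‖
        ≤ ∫ y in Ioi x, (Cg * Real.exp (Ff a K a)) * Mf a K y := by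
      refine norm_integral_le_of_norm_le ((hM.integrableOn).const_mul _)
        ((ae_restrict_iff' measurableSet_Ioi).2 (ae_of_all _ fun y hy => ?_))
      show ‖K x y * f y‖ ≤ Cg * Real.exp (Ff a K a) * Mf a K y
      rw [norm_mul, mul_comm]
      exact mul_le_mul (hfb y (hx.trans hy)) (norm_K_le hbdd hx hy) (norm_nonneg _)
        (mul_nonneg hCg (Real.exp_nonneg _))
    refine h3.trans (le_of_eq ?_)
    rw [integral_const_mul]
  exact ⟨f, hfm, hfb, heqn, hdiff⟩
end

section
/- Let K(r,s) = (1/2) r^{(d−1)/2} e^{-(s²−r²)/4} s^{-(d+1)/2} 1_{[0,∞)}(s−r) for r,s > 0 and d ≥ 1. Then |K(r,s)| ≤ C min{r^{-1}, s^{-1}} for some constant C depending only on d, and consequently the integral operator f ↦ ∫₀^∞ K(·,s) f(s) ds is bounded on L²(0,∞). -/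
open MeasureTheory Set

open Function
open scoped ENNReal NNReal

noncomputable def mker (r s : ℝ) : ℝ≥0∞ := ENNReal.ofReal (min r⁻¹ s⁻¹)
noncomputable def hwt (s : ℝ) : ℝ≥0∞ := ENNReal.ofReal (s ^ (-2⁻¹ : ℝ))

lemma hwt_ne_zero {s : ℝ} (hs : 0 < s) : hwt s ≠ 0 :=
  (ENNReal.ofReal_pos.mpr (Real.rpow_pos_of_pos hs _)).ne'

lemma hwt_ne_top (s : ℝ) : hwt s ≠ ⊤ := ENNReal.ofReal_ne_top

lemma mker_meas : Measurable (fun p : ℝ × ℝ => mker p.1 p.2) :=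
  (measurable_fst.inv.min measurable_snd.inv).ennreal_ofReal

lemma hwt_meas : Measurable hwt := (measurable_id.pow measurable_const).ennreal_ofReal
lemma mker_meas1 (r : ℝ) : Measurable (mker r) :=
  (measurable_const.min measurable_inv).ennreal_ofReal
lemma mker_comm (r s : ℝ) : mker r s = mker s r := by rw [mker, min_comm, mker]

lemma key_s9 {r : ℝ} (hr : 0 < r) :
    ∫⁻ s in Ioi (0:ℝ), mker r s * hwt s ≤ 4 * hwt r := by
  rw [← Ioc_union_Ioi_eq_Ioi hr.le,
    lintegral_union measurableSet_Ioi Ioc_disjoint_Ioi_same]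
  have h1 : ∫⁻ s in Ioc (0:ℝ) r, mker r s * hwt s ≤ 2 * hwt r := by
    have step : ∫⁻ s in Ioc (0:ℝ) r, mker r s * hwt s
        ≤ ∫⁻ s in Ioc (0:ℝ) r, ENNReal.ofReal (r⁻¹ * s ^ (-2⁻¹ : ℝ)) := by
      refine setLIntegral_mono' measurableSet_Ioc fun s hs => ?_
      rw [ENNReal.ofReal_mul (by positivity)]
      exact mul_le_mul_left (ENNReal.ofReal_le_ofReal (min_le_left _ _)) _
    refine step.trans ?_
    rw [← ofReal_integral_eq_lintegral_ofReal]
    · have hval : ∫ s in Ioc (0:ℝ) r, r⁻¹ * s ^ (-2⁻¹ : ℝ) = 2 * r ^ (-2⁻¹:ℝ) := by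
        have hmul : r⁻¹ * r ^ (2⁻¹:ℝ) = r ^ (-2⁻¹:ℝ) := by
          rw [← Real.rpow_neg_one r, ← Real.rpow_add hr]; norm_num
        rw [MeasureTheory.integral_const_mul, ← intervalIntegral.integral_of_le hr.le,
          integral_rpow (Or.inl (by norm_num)), Real.zero_rpow (by norm_num),
          show (-2⁻¹ + 1 : ℝ) = 2⁻¹ by norm_num,
          show (r ^ (2⁻¹:ℝ) - 0)/(2⁻¹) = 2 * r ^ (2⁻¹:ℝ) by ring,
          show r⁻¹ * (2 * r ^ (2⁻¹:ℝ)) = 2 * (r⁻¹ * r ^ (2⁻¹:ℝ)) by ring, hmul]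
      rw [hval, ENNReal.ofReal_mul (by norm_num)]
      simp [hwt]
    · exact (intervalIntegrable_iff_integrableOn_Ioc_of_le hr.le).mp
        (intervalIntegral.intervalIntegrable_rpow' (by norm_num)) |>.const_mul _
    · filter_upwards [ae_restrict_mem measurableSet_Ioc] with s hs
      have : (0:ℝ) < s := hs.1
      positivity
  have h2 : ∫⁻ s in Ioi r, mker r s * hwt s ≤ 2 * hwt r := by
    have step : ∫⁻ s in Ioi r, mker r s * hwt s
        ≤ ∫⁻ s in Ioi r, ENNReal.ofReal (s ^ (-(3:ℝ)/2)) := by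
      refine setLIntegral_mono' measurableSet_Ioi fun s hs => ?_
      have hs0 : 0 < s := hr.trans hs
      have h1 : mker r s * hwt s ≤ ENNReal.ofReal (s⁻¹ * s ^ (-2⁻¹:ℝ)) := by
        rw [ENNReal.ofReal_mul (by positivity)]
        exact mul_le_mul_left (ENNReal.ofReal_le_ofReal (min_le_right _ _)) _
      refine h1.trans_eq ?_
      congr 1
      rw [← Real.rpow_neg_one s, ← Real.rpow_add hs0]; norm_num
    refine step.trans ?_
    rw [← ofReal_integral_eq_lintegral_ofReal]
    · rw [integral_Ioi_rpow_of_lt (by norm_num) hr,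
        show (-(3:ℝ)/2 + 1 : ℝ) = -2⁻¹ by norm_num,
        show -r ^ (-2⁻¹:ℝ) / (-2⁻¹) = 2 * r ^ (-2⁻¹:ℝ) by ring,
        ENNReal.ofReal_mul (by norm_num)]
      simp [hwt]
    · exact integrableOn_Ioi_rpow_of_lt (by norm_num) hr
    · filter_upwards [ae_restrict_mem measurableSet_Ioi] with s hs
      have : (0:ℝ) < s := hr.trans hs
      positivity
  calc _ ≤ 2 * hwt r + 2 * hwt r := add_le_add h1 h2
    _ = 4 * hwt r := by rw [← add_mul]; norm_num

lemma rpow_half_sq (x : ℝ≥0∞) : (x ^ (2⁻¹:ℝ)) ^ (2:ℝ) = x := by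
  rw [← ENNReal.rpow_mul]; norm_num

lemma schur {g : ℝ → ℝ≥0∞} (hg : AEMeasurable g (volume.restrict (Ioi 0))) :
    ∫⁻ r in Ioi (0:ℝ), (∫⁻ s in Ioi (0:ℝ), mker r s * g s) ^ (2:ℝ)
      ≤ 16 * ∫⁻ s in Ioi (0:ℝ), g s ^ (2:ℝ) := by
  have hconj : Real.HolderConjugate 2 2 := Real.HolderConjugate.two_two
  have cs : ∀ r : ℝ, 0 < r →
      (∫⁻ s in Ioi (0:ℝ), mker r s * g s) ^ (2:ℝ)
        ≤ (4 * hwt r) * ∫⁻ s in Ioi (0:ℝ), mker r s * g s ^ (2:ℝ) * (hwt s)⁻¹ := by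
    intro r hr
    set u : ℝ → ℝ≥0∞ := fun s => (mker r s * hwt s) ^ (2⁻¹:ℝ) with hu
    set v : ℝ → ℝ≥0∞ := fun s => (mker r s * g s ^ (2:ℝ) * (hwt s)⁻¹) ^ (2⁻¹:ℝ) with hv
    have huv : ∀ s ∈ Ioi (0:ℝ), mker r s * g s = (u * v) s := by
      intro s hs
      have hs0 : (0:ℝ) < s := hs
      have e1 : mker r s * hwt s * (mker r s * g s ^ (2:ℝ) * (hwt s)⁻¹)
          = (mker r s * g s) ^ (2:ℝ) * (hwt s * (hwt s)⁻¹) := by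
        rw [ENNReal.mul_rpow_of_nonneg _ _ (by norm_num : (0:ℝ) ≤ 2),
          ENNReal.rpow_two, ENNReal.rpow_two]
        ring
      show _ = u s * v s
      rw [hu, hv, ← ENNReal.mul_rpow_of_nonneg _ _ (by norm_num : (0:ℝ) ≤ 2⁻¹), e1,
        ENNReal.mul_inv_cancel (hwt_ne_zero hs0) (hwt_ne_top s), mul_one, ← ENNReal.rpow_mul]
      norm_num
    have hum : AEMeasurable u (volume.restrict (Ioi 0)) :=
      (((mker_meas1 r).mul hwt_meas).pow measurable_const).aemeasurable
    have hvm : AEMeasurable v (volume.restrict (Ioi 0)) :=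
      ((((mker_meas1 r).aemeasurable.mul (hg.pow aemeasurable_const)).mul
        hwt_meas.inv.aemeasurable).pow aemeasurable_const)
    have hcs := ENNReal.lintegral_mul_le_Lp_mul_Lq (volume.restrict (Ioi 0)) hconj hum hvm
    have e2 : ∫⁻ s in Ioi (0:ℝ), mker r s * g s = ∫⁻ s in Ioi (0:ℝ), (u * v) s :=
      setLIntegral_congr_fun measurableSet_Ioi huv
    have e3 : ∫⁻ s in Ioi (0:ℝ), u s ^ (2:ℝ) = ∫⁻ s in Ioi (0:ℝ), mker r s * hwt s := by
      simp_rw [hu, rpow_half_sq]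
    have e4 : ∫⁻ s in Ioi (0:ℝ), v s ^ (2:ℝ)
        = ∫⁻ s in Ioi (0:ℝ), mker r s * g s ^ (2:ℝ) * (hwt s)⁻¹ := by
      simp_rw [hv, rpow_half_sq]
    rw [e2]
    calc (∫⁻ s in Ioi (0:ℝ), (u * v) s) ^ (2:ℝ)
        ≤ ((∫⁻ s in Ioi (0:ℝ), u s ^ (2:ℝ)) ^ (1/(2:ℝ))
            * (∫⁻ s in Ioi (0:ℝ), v s ^ (2:ℝ)) ^ (1/(2:ℝ))) ^ (2:ℝ) :=
          ENNReal.rpow_le_rpow hcs (by norm_num)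
      _ = (∫⁻ s in Ioi (0:ℝ), u s ^ (2:ℝ)) * (∫⁻ s in Ioi (0:ℝ), v s ^ (2:ℝ)) := by
          rw [ENNReal.mul_rpow_of_nonneg _ _ (by norm_num : (0:ℝ) ≤ 2),
            ← ENNReal.rpow_mul, ← ENNReal.rpow_mul]
          norm_num
      _ ≤ (4 * hwt r) * ∫⁻ s in Ioi (0:ℝ), mker r s * g s ^ (2:ℝ) * (hwt s)⁻¹ := by
          rw [e3, e4]; exact mul_le_mul_left (key_s9 hr) _
  have hgsnd : AEMeasurable (fun p : ℝ × ℝ => g p.2)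
      ((volume.restrict (Ioi 0)).prod (volume.restrict (Ioi 0))) :=
    hg.comp_quasiMeasurePreserving MeasureTheory.Measure.quasiMeasurePreserving_snd
  have hF : AEMeasurable
      (uncurry fun r s => (4 * hwt r) * (mker r s * g s ^ (2:ℝ) * (hwt s)⁻¹))
      ((volume.restrict (Ioi 0)).prod (volume.restrict (Ioi 0))) := by
    rw [show (uncurry fun r s => (4 * hwt r) * (mker r s * g s ^ (2:ℝ) * (hwt s)⁻¹))
        = fun p : ℝ × ℝ => (4 * hwt p.1) * (mker p.1 p.2 * g p.2 ^ (2:ℝ) * (hwt p.2)⁻¹) from rfl]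
    exact ((measurable_const.mul (hwt_meas.comp measurable_fst)).aemeasurable.mul
      ((mker_meas.aemeasurable.mul (hgsnd.pow aemeasurable_const)).mul
        ((hwt_meas.comp measurable_snd).inv.aemeasurable)))
  calc ∫⁻ r in Ioi (0:ℝ), (∫⁻ s in Ioi (0:ℝ), mker r s * g s) ^ (2:ℝ)
      ≤ ∫⁻ r in Ioi (0:ℝ), ∫⁻ s in Ioi (0:ℝ),
          (4 * hwt r) * (mker r s * g s ^ (2:ℝ) * (hwt s)⁻¹) := by
        refine lintegral_mono_ae ?_
        filter_upwards [ae_restrict_mem measurableSet_Ioi] with r hr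
        rw [lintegral_const_mul' _ _ (ENNReal.mul_ne_top (by simp) (hwt_ne_top r))]
        exact cs r hr
    _ = ∫⁻ s in Ioi (0:ℝ), ∫⁻ r in Ioi (0:ℝ),
          (4 * hwt r) * (mker r s * g s ^ (2:ℝ) * (hwt s)⁻¹) :=
        lintegral_lintegral_swap hF
    _ ≤ ∫⁻ s in Ioi (0:ℝ), 16 * g s ^ (2:ℝ) := by
        refine lintegral_mono_ae ?_
        filter_upwards [ae_restrict_mem measurableSet_Ioi] with s hs
        have hs0 : (0:ℝ) < s := hs
        have e5 : ∀ r : ℝ, (4 * hwt r) * (mker r s * g s ^ (2:ℝ) * (hwt s)⁻¹)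
            = (4 * g s ^ (2:ℝ) * (hwt s)⁻¹) * (mker s r * hwt r) := by
          intro r; rw [mker_comm r s]; ring
        simp_rw [e5]
        rw [lintegral_const_mul _ (f := fun r => mker s r * hwt r) ((mker_meas1 s).mul hwt_meas)]
        calc (4 * g s ^ (2:ℝ) * (hwt s)⁻¹) * ∫⁻ r in Ioi (0:ℝ), mker s r * hwt r
            ≤ (4 * g s ^ (2:ℝ) * (hwt s)⁻¹) * (4 * hwt s) :=
              mul_le_mul_right (key_s9 hs0) _
          _ = 16 * g s ^ (2:ℝ) * ((hwt s)⁻¹ * hwt s) := by ring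
          _ = 16 * g s ^ (2:ℝ) := by
              rw [ENNReal.inv_mul_cancel (hwt_ne_zero hs0) (hwt_ne_top s), mul_one]
    _ = 16 * ∫⁻ s in Ioi (0:ℝ), g s ^ (2:ℝ) :=
        lintegral_const_mul'' 16 (hg.pow aemeasurable_const)

lemma opbound (K : ℝ → ℝ → ℝ)
    (hK : ∀ r s : ℝ, 0 < r → 0 < s → |K r s| ≤ 2⁻¹ * min r⁻¹ s⁻¹)
    (hvan : ∀ r s : ℝ, s < r → K r s = 0)
    (f : ℝ → ℝ) (a : ℝ) (ha : 0 ≤ a)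
    (hf : AEMeasurable f (volume.restrict (Ioi a)))
    (hzero : ∀ r ∈ Ioo (0:ℝ) a, (∫ s in Ioi (0:ℝ), K r s * f s) = 0) :
    eLpNorm (fun r => ∫ s in Ioi (0:ℝ), K r s * f s) 2 (volume.restrict (Ioi 0))
      ≤ 2 * eLpNorm f 2 (volume.restrict (Ioi 0)) := by
  set g : ℝ → ℝ≥0∞ := (Ioi a).indicator (fun s => (‖f s‖₊ : ℝ≥0∞)) with hgdef
  have hg : AEMeasurable g (volume.restrict (Ioi 0)) := by
    rw [hgdef, aemeasurable_indicator_iff measurableSet_Ioi,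
      Measure.restrict_restrict measurableSet_Ioi,
      Set.inter_eq_left.mpr (Ioi_subset_Ioi ha)]
    exact hf.enorm
  have hne : ∀ᵐ r ∂(volume.restrict (Ioi (0:ℝ))), r ≠ a := by
    refine ae_restrict_of_ae ?_
    rw [ae_iff]
    simpa using measure_singleton a
  have hpt : ∀ᵐ r ∂(volume.restrict (Ioi (0:ℝ))),
      (‖∫ s in Ioi (0:ℝ), K r s * f s‖₊ : ℝ≥0∞)
        ≤ 2⁻¹ * ∫⁻ s in Ioi (0:ℝ), mker r s * g s := by
    filter_upwards [ae_restrict_mem measurableSet_Ioi, hne] with r hr hra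
    by_cases hlt : r < a
    · rw [hzero r ⟨hr, hlt⟩]; simp
    · have hra' : a < r := lt_of_le_of_ne (not_lt.mp hlt) (Ne.symm hra)
      calc (‖∫ s in Ioi (0:ℝ), K r s * f s‖₊ : ℝ≥0∞)
          ≤ ∫⁻ s in Ioi (0:ℝ), (‖K r s * f s‖₊ : ℝ≥0∞) :=
            enorm_integral_le_lintegral_enorm _
        _ ≤ ∫⁻ s in Ioi (0:ℝ), 2⁻¹ * (mker r s * g s) := by
            refine lintegral_mono_ae ?_
            filter_upwards [ae_restrict_mem measurableSet_Ioi] with s hs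
            by_cases hrs : r ≤ s
            · have hsa : s ∈ Ioi a := lt_of_lt_of_le hra' hrs
              rw [hgdef, ← mul_assoc]
              rw [Set.indicator_of_mem hsa]
              rw [nnnorm_mul, ENNReal.coe_mul]
              refine mul_le_mul_left ?_ _
              rw [show ((‖K r s‖₊ : ℝ≥0∞)) = ‖K r s‖ₑ from rfl, Real.enorm_eq_ofReal_abs]
              calc ENNReal.ofReal |K r s|
                  ≤ ENNReal.ofReal (2⁻¹ * min r⁻¹ s⁻¹) :=
                    ENNReal.ofReal_le_ofReal (hK r s hr hs)
                _ = 2⁻¹ * mker r s := by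
                    rw [ENNReal.ofReal_mul (by norm_num), mker,
                      ENNReal.ofReal_inv_of_pos (by norm_num : (0:ℝ) < 2),
                      ENNReal.ofReal_ofNat]
            · rw [hvan r s (not_le.mp hrs), zero_mul]; simp
        _ = 2⁻¹ * ∫⁻ s in Ioi (0:ℝ), mker r s * g s :=
            lintegral_const_mul' _ _ (by simp)
  have c1 : ((2:ℝ≥0∞)⁻¹) ^ (2:ℝ) = 4⁻¹ := by
    rw [ENNReal.inv_rpow, ENNReal.rpow_two]; norm_num
  have main : ∫⁻ r in Ioi (0:ℝ), (‖∫ s in Ioi (0:ℝ), K r s * f s‖₊ : ℝ≥0∞) ^ (2:ℝ)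
      ≤ 4 * ∫⁻ s in Ioi (0:ℝ), (‖f s‖₊ : ℝ≥0∞) ^ (2:ℝ) := by
    calc ∫⁻ r in Ioi (0:ℝ), (‖∫ s in Ioi (0:ℝ), K r s * f s‖₊ : ℝ≥0∞) ^ (2:ℝ)
        ≤ ∫⁻ r in Ioi (0:ℝ), (2⁻¹ * ∫⁻ s in Ioi (0:ℝ), mker r s * g s) ^ (2:ℝ) := by
          refine lintegral_mono_ae ?_
          filter_upwards [hpt] with r h
          exact ENNReal.rpow_le_rpow h (by norm_num)
      _ = ∫⁻ r in Ioi (0:ℝ), 4⁻¹ * (∫⁻ s in Ioi (0:ℝ), mker r s * g s) ^ (2:ℝ) := by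
          simp_rw [ENNReal.mul_rpow_of_nonneg _ _ (by norm_num : (0:ℝ) ≤ 2), c1]
      _ = 4⁻¹ * ∫⁻ r in Ioi (0:ℝ), (∫⁻ s in Ioi (0:ℝ), mker r s * g s) ^ (2:ℝ) :=
          lintegral_const_mul' _ _ (by simp)
      _ ≤ 4⁻¹ * (16 * ∫⁻ s in Ioi (0:ℝ), g s ^ (2:ℝ)) := mul_le_mul_right (schur hg) _
      _ = 4 * ∫⁻ s in Ioi (0:ℝ), g s ^ (2:ℝ) := by
          rw [← mul_assoc, show ((4:ℝ≥0∞)⁻¹ * 16) = 4 by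
            rw [show (16:ℝ≥0∞) = 4 * 4 by norm_num, ← mul_assoc,
              ENNReal.inv_mul_cancel (by norm_num) (by norm_num), one_mul]]
      _ ≤ 4 * ∫⁻ s in Ioi (0:ℝ), (‖f s‖₊ : ℝ≥0∞) ^ (2:ℝ) := by
          refine mul_le_mul_right (lintegral_mono fun s => ?_) _
          exact ENNReal.rpow_le_rpow (Set.indicator_le_self _ _ s) (by norm_num)
  rw [eLpNorm_eq_lintegral_rpow_enorm_toReal (by norm_num) (by norm_num),
    eLpNorm_eq_lintegral_rpow_enorm_toReal (by norm_num) (by norm_num)]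
  simp only [ENNReal.toReal_ofNat]
  calc (∫⁻ r in Ioi (0:ℝ), (‖∫ s in Ioi (0:ℝ), K r s * f s‖₊ : ℝ≥0∞) ^ (2:ℝ)) ^ (1/(2:ℝ))
      ≤ (4 * ∫⁻ s in Ioi (0:ℝ), (‖f s‖₊ : ℝ≥0∞) ^ (2:ℝ)) ^ (1/(2:ℝ)) :=
        ENNReal.rpow_le_rpow main (by norm_num)
    _ = 2 * (∫⁻ s in Ioi (0:ℝ), (‖f s‖₊ : ℝ≥0∞) ^ (2:ℝ)) ^ (1/(2:ℝ)) := by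
        rw [ENNReal.mul_rpow_of_nonneg _ _ (by norm_num : (0:ℝ) ≤ 1/2),
          show ((4:ℝ≥0∞)) = 2 ^ (2:ℝ) by rw [ENNReal.rpow_two]; norm_num,
          ← ENNReal.rpow_mul]
        norm_num

lemma kerbound (d : ℕ) (hd : 1 ≤ d) (r s : ℝ) (hr : 0 < r) (hs : 0 < s) :
    |(if r ≤ s then
        (1/2) * r ^ (((d : ℝ) - 1)/2) * Real.exp (-(s^2 - r^2)/4) * s ^ (-(((d : ℝ) + 1)/2))
      else 0)| ≤ 2⁻¹ * min r⁻¹ s⁻¹ := by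
  have hd1 : (1:ℝ) ≤ (d:ℝ) := by exact_mod_cast hd
  by_cases hrs : r ≤ s
  · rw [if_pos hrs, abs_of_nonneg (by positivity)]
    have e1 : r ^ (((d:ℝ)-1)/2) ≤ s ^ (((d:ℝ)-1)/2) :=
      Real.rpow_le_rpow hr.le hrs (by linarith)
    have e2 : Real.exp (-(s^2 - r^2)/4) ≤ 1 := by
      rw [Real.exp_le_one_iff]
      nlinarith [pow_le_pow_left₀ hr.le hrs 2]
    have e3 : s ^ (((d:ℝ)-1)/2) * s ^ (-(((d:ℝ)+1)/2)) = s⁻¹ := by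
      rw [← Real.rpow_add hs, show ((d:ℝ)-1)/2 + (-(((d:ℝ)+1)/2)) = -1 by ring,
        Real.rpow_neg_one]
    have hmin : min r⁻¹ s⁻¹ = s⁻¹ := min_eq_right (by
      exact inv_anti₀ hr hrs)
    rw [hmin]
    calc (1/2) * r ^ (((d:ℝ)-1)/2) * Real.exp (-(s^2 - r^2)/4) * s ^ (-(((d:ℝ)+1)/2))
        ≤ (1/2) * s ^ (((d:ℝ)-1)/2) * 1 * s ^ (-(((d:ℝ)+1)/2)) := by
          gcongr
      _ = 2⁻¹ * (s ^ (((d:ℝ)-1)/2) * s ^ (-(((d:ℝ)+1)/2))) := by ring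
      _ = 2⁻¹ * s⁻¹ := by rw [e3]
  · rw [if_neg hrs, abs_zero]
    have : (0:ℝ) < min r⁻¹ s⁻¹ := lt_min (by positivity) (by positivity)
    positivity

lemma intzero (d : ℕ) {f : ℝ → ℝ} {r : ℝ} (hr : 0 < r)
    (hnm : ¬ AEMeasurable f (volume.restrict (Ioi r))) :
    (∫ s in Ioi (0:ℝ),
      (if r ≤ s then
        (1/2) * r ^ (((d : ℝ) - 1)/2) * Real.exp (-(s^2 - r^2)/4) * s ^ (-(((d : ℝ) + 1)/2))
      else 0) * f s) = 0 := by
  apply integral_undef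
  intro hint
  apply hnm
  set Kp : ℝ → ℝ := fun s =>
    (1/2) * r ^ (((d : ℝ) - 1)/2) * Real.exp (-(s^2 - r^2)/4) * s ^ (-(((d : ℝ) + 1)/2))
    with hKp
  have hKm : Measurable Kp := by
    have h1 : Measurable fun s : ℝ => -(s^2 - r^2)/4 := by measurability
    exact (measurable_const.mul h1.exp).mul (measurable_id.pow measurable_const)
  have h1 : AEStronglyMeasurable (fun s => (if r ≤ s then Kp s else 0) * f s)
      (volume.restrict (Ioi r)) :=
    hint.1.mono_measure (Measure.restrict_mono (Ioi_subset_Ioi hr.le) le_rfl)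
  have heq : (fun s => (if r ≤ s then Kp s else 0) * f s)
      =ᵐ[volume.restrict (Ioi r)] fun s => Kp s * f s := by
    filter_upwards [ae_restrict_mem measurableSet_Ioi] with s hs
    rw [if_pos (le_of_lt hs)]
  have h2 : AEMeasurable (fun s => Kp s * f s) (volume.restrict (Ioi r)) :=
    (h1.congr heq).aemeasurable
  have h3 : AEMeasurable (fun s => (Kp s)⁻¹ * (Kp s * f s)) (volume.restrict (Ioi r)) :=
    hKm.inv.aemeasurable.mul h2
  refine h3.congr ?_
  filter_upwards [ae_restrict_mem measurableSet_Ioi] with s hs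
  have hs0 : (0:ℝ) < s := hr.trans hs
  have hKpos : Kp s ≠ 0 := by rw [hKp]; positivity
  rw [← mul_assoc, inv_mul_cancel₀ hKpos, one_mul]

/-- The kernel `K(r,s) = (1/2) r^{(d−1)/2} e^{-(s²−r²)/4} s^{-(d+1)/2} 1_{s ≥ r}` satisfies
`|K(r,s)| ≤ C min{r⁻¹, s⁻¹}` and induces a bounded operator on `L²(0,∞)`. -/
theorem stmt9 (d : ℕ) (hd : 1 ≤ d) :
    ∃ C : ℝ, 0 < C ∧
      (∀ r s : ℝ, 0 < r → 0 < s →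
        |(if r ≤ s then
            (1/2) * r ^ (((d : ℝ) - 1)/2) * Real.exp (-(s^2 - r^2)/4) * s ^ (-(((d : ℝ) + 1)/2))
          else 0)| ≤ C * min r⁻¹ s⁻¹) ∧
      (∀ f : ℝ → ℝ,
        eLpNorm (fun r => ∫ s in Ioi (0:ℝ),
            (if r ≤ s then
              (1/2) * r ^ (((d : ℝ) - 1)/2) * Real.exp (-(s^2 - r^2)/4) * s ^ (-(((d : ℝ) + 1)/2))
            else 0) * f s)
          2 (volume.restrict (Ioi 0)) ≤
        ENNReal.ofReal C * eLpNorm f 2 (volume.restrict (Ioi 0))) := by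
  set K : ℝ → ℝ → ℝ := fun r s =>
    if r ≤ s then
      (1/2) * r ^ (((d : ℝ) - 1)/2) * Real.exp (-(s^2 - r^2)/4) * s ^ (-(((d : ℝ) + 1)/2))
    else 0 with hKdef
  have hK : ∀ r s : ℝ, 0 < r → 0 < s → |K r s| ≤ 2⁻¹ * min r⁻¹ s⁻¹ :=
    fun r s hr hs => kerbound d hd r s hr hs
  have hvan : ∀ r s : ℝ, s < r → K r s = 0 := fun r s h => if_neg (not_le.mpr h)
  refine ⟨2, by norm_num, ?_, ?_⟩
  · intro r s hr hs
    refine (hK r s hr hs).trans ?_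
    have : (0:ℝ) ≤ min r⁻¹ s⁻¹ := le_min (by positivity) (by positivity)
    nlinarith
  · intro f
    have hof : ENNReal.ofReal (2:ℝ) = 2 := by simp
    rw [hof]
    by_cases h0 : AEMeasurable f (volume.restrict (Ioi (0:ℝ)))
    · exact opbound K hK hvan f 0 le_rfl h0 (by simp)
    · set S := {t : ℝ | AEMeasurable f (volume.restrict (Ioi t))} with hSdef
      have Sup : ∀ {t t' : ℝ}, t ∈ S → t ≤ t' → t' ∈ S := fun ht htt' =>
        ht.mono_measure (Measure.restrict_mono (Ioi_subset_Ioi htt') le_rfl)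
      by_cases hSne : S.Nonempty
      · have hS0 : ∀ t ∈ S, 0 ≤ t := by
          intro t ht
          by_contra h
          exact h0 (Sup ht (not_le.mp h).le)
        have ha0 : 0 ≤ sInf S := le_csInf hSne hS0
        have hbdd : BddBelow S := ⟨0, hS0⟩
        have hmem : ∀ t, sInf S < t → t ∈ S := by
          intro t ht
          obtain ⟨x, hxS, hxt⟩ := exists_lt_of_csInf_lt hSne ht
          exact Sup hxS hxt.le
        have hfa : AEMeasurable f (volume.restrict (Ioi (sInf S))) := by
          have hU : Ioi (sInf S) = ⋃ n : ℕ, Ioi (sInf S + ((n:ℝ)+1)⁻¹) := by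
            ext x
            simp only [mem_Ioi, mem_iUnion]
            constructor
            · intro hx
              obtain ⟨n, hn⟩ := exists_nat_one_div_lt (sub_pos.mpr hx)
              exact ⟨n, by rw [one_div] at hn; linarith⟩
            · rintro ⟨n, hn⟩
              have : (0:ℝ) < ((n:ℝ)+1)⁻¹ := by positivity
              linarith
          rw [hU, aemeasurable_iUnion_iff]
          intro n
          exact hmem _ (lt_add_of_pos_right _ (by positivity))
        refine opbound K hK hvan f (sInf S) ha0 hfa ?_
        intro r hr
        refine intzero d hr.1 ?_
        intro hmeas
        exact absurd (csInf_le hbdd hmeas) (not_le.mpr hr.2)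
      · have hz : ∀ r ∈ Ioi (0:ℝ), (∫ s in Ioi (0:ℝ), K r s * f s) = 0 :=
          fun r hr => intzero d hr fun h => hSne ⟨r, h⟩
        have hzero : eLpNorm (fun r => ∫ s in Ioi (0:ℝ), K r s * f s) 2
            (volume.restrict (Ioi 0)) = 0 := by
          have heq : (fun r => ∫ s in Ioi (0:ℝ), K r s * f s)
              =ᵐ[volume.restrict (Ioi (0:ℝ))] 0 := by
            filter_upwards [ae_restrict_mem measurableSet_Ioi] with r hr
            exact hz r hr
          rw [eLpNorm_congr_ae heq, eLpNorm_zero]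
        rw [hzero]
        exact zero_le
end

section
/- Let ω > 0, λ = d + b + iω, and define for f ∈ L²(0,∞) the operator R̃(λ)f(r) = ∫₀^∞ G(r,s,ω) f(s) ds. Suppose |G(r,s,ω)| ≤ C ω^{-1/2} ⟨ω^{-1/2}r⟩^{-1/2+b/2}⟨ω^{-1/2}s⟩^{-1/2-b/2} for r ≤ s and |G(r,s,ω)| ≤ C ω^{-1/2} ⟨ω^{-1/2}r⟩^{-1/2-b/2}⟨ω^{-1/2}s⟩^{-1/2+b/2} for r ≥ s. Then ‖R̃(λ)f‖_{L²(0,∞)} ≤ C' ‖f‖_{L²(0,∞)} with C' independent of ω. -/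
open MeasureTheory Set

namespace Stmt14

open Function
open scoped ENNReal

noncomputable def e (t : ℝ≥0∞) : ℝ≥0∞ := 1 - (t + 1)⁻¹

lemma e_le_one (t : ℝ≥0∞) : e t ≤ 1 := tsub_le_self

lemma e_mono : Monotone e := by
  intro s t hst
  exact tsub_le_tsub_left (ENNReal.inv_le_inv.2 (add_le_add_left hst 1)) 1

lemma e_injective : Function.Injective e := by
  intro s t hst
  have h1 : ∀ u : ℝ≥0∞, (u + 1)⁻¹ ≤ 1 := by
    intro u
    rw [ENNReal.inv_le_one]
    exact le_add_self
  have h2 : (s + 1)⁻¹ = (t + 1)⁻¹ := by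
    have h := congrArg (fun x => 1 - x) hst
    simp only [e] at h
    rwa [ENNReal.sub_sub_cancel ENNReal.one_ne_top (h1 s), ENNReal.sub_sub_cancel ENNReal.one_ne_top (h1 t)] at h
  have h3 : s + 1 = t + 1 := by
    rw [← inv_inv (s+1), h2, inv_inv]
  exact (ENNReal.add_left_inj (by simp)).1 h3

lemma e_measurable : Measurable e :=
  measurable_const.sub ((measurable_id.add_const 1).inv)

/-- Measurable essential envelope of minorants of an arbitrary function. -/
lemma exists_envelope {α : Type*} [MeasurableSpace α] (μ : Measure α) [SFinite μ]
    (φ : α → ℝ≥0∞) :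
    ∃ ψ : α → ℝ≥0∞, Measurable ψ ∧ ψ ≤ φ ∧
      ∀ ρ : α → ℝ≥0∞, Measurable ρ → ρ ≤ φ → ρ ≤ᵐ[μ] ψ := by
  set ν := μ.toFinite with hν
  have hνfin : ν Set.univ ≠ ∞ := measure_ne_top ν _
  set c := ⨆ (ρ : α → ℝ≥0∞) (_ : Measurable ρ) (_ : ρ ≤ φ), ∫⁻ x, e (ρ x) ∂ν with hc
  have hbound : ∀ ρ : α → ℝ≥0∞, ∫⁻ x, e (ρ x) ∂ν ≤ ν Set.univ := by
    intro ρ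
    calc ∫⁻ x, e (ρ x) ∂ν ≤ ∫⁻ _, 1 ∂ν := lintegral_mono fun x => e_le_one _
    _ = ν Set.univ := by simp
  have hcfin : c ≠ ∞ := by
    refine ne_top_of_le_ne_top hνfin ?_
    rw [hc]
    exact iSup_le fun ρ => iSup_le fun _ => iSup_le fun _ => hbound ρ
  have hseq : ∀ n : ℕ, ∃ ρ : α → ℝ≥0∞, Measurable ρ ∧ ρ ≤ φ ∧
      c ≤ (∫⁻ x, e (ρ x) ∂ν) + (↑(n+1))⁻¹ := by
    intro n
    rcases eq_or_ne c 0 with h0 | h0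
    · exact ⟨0, measurable_const, fun x => zero_le, by simp [h0]⟩
    · have hlt : c - (↑(n+1))⁻¹ < c :=
        ENNReal.sub_lt_self hcfin h0 (by simp)
      rw [hc] at hlt
      simp only [lt_iSup_iff] at hlt
      obtain ⟨ρ, hm, hle, hρ⟩ := hlt
      exact ⟨ρ, hm, hle, tsub_le_iff_right.1 hρ.le⟩
  choose ρ hm hle hc2 using hseq
  set ψ : α → ℝ≥0∞ := fun x => ⨆ n, ρ n x with hψ
  have hmψ : Measurable ψ := Measurable.iSup hm
  have hψφ : ψ ≤ φ := fun x => iSup_le fun n => hle n x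
  have heψfin : ∫⁻ x, e (ψ x) ∂ν ≠ ∞ := ne_top_of_le_ne_top hνfin (hbound ψ)
  have hψc : c ≤ ∫⁻ x, e (ψ x) ∂ν := by
    refine ENNReal.le_of_forall_pos_le_add fun ε hε _ => ?_
    obtain ⟨n, hn⟩ := ENNReal.exists_inv_nat_lt (ENNReal.coe_ne_zero.2 hε.ne')
    calc c ≤ (∫⁻ x, e (ρ n x) ∂ν) + (↑(n+1))⁻¹ := hc2 n
    _ ≤ (∫⁻ x, e (ψ x) ∂ν) + ↑ε := by
        refine add_le_add (lintegral_mono fun x => e_mono (le_iSup (fun k => ρ k x) n)) ?_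
        refine le_trans (ENNReal.inv_le_inv.2 ?_) hn.le
        exact_mod_cast Nat.le_succ n
  refine ⟨ψ, hmψ, hψφ, ?_⟩
  intro σ hσm hσφ
  -- consider σ ⊔ ψ
  have hmax_le : ∫⁻ x, e (σ x ⊔ ψ x) ∂ν ≤ ∫⁻ x, e (ψ x) ∂ν := by
    refine le_trans ?_ hψc
    rw [hc]
    refine le_iSup_of_le (fun x => σ x ⊔ ψ x)
      (le_iSup_of_le (hσm.sup hmψ) (le_iSup_of_le ?_ le_rfl))
    exact fun x => sup_le (hσφ x) (hψφ x)
  have hptle : (fun x => e (ψ x)) ≤ fun x => e (σ x ⊔ ψ x) :=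
    fun x => e_mono le_sup_right
  have hgm : Measurable fun x => e (ψ x) := e_measurable.comp hmψ
  have hfm : Measurable fun x => e (σ x ⊔ ψ x) := e_measurable.comp (hσm.sup hmψ)
  have hsub : ∫⁻ x, (e (σ x ⊔ ψ x) - e (ψ x)) ∂ν = 0 := by
    rw [lintegral_sub hgm heψfin (ae_of_all _ hptle)]
    exact tsub_eq_zero_of_le hmax_le
  have hae : ∀ᵐ x ∂ν, e (σ x ⊔ ψ x) - e (ψ x) = 0 := by
    have := (lintegral_eq_zero_iff (hfm.sub hgm)).1 hsub
    filter_upwards [this] with x hx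
    simpa using hx
  have haeν : ∀ᵐ x ∂ν, σ x ≤ ψ x := by
    filter_upwards [hae] with x hx
    have h1 : e (σ x ⊔ ψ x) ≤ e (ψ x) := tsub_eq_zero_iff_le.1 hx
    have h2 : e (σ x ⊔ ψ x) = e (ψ x) := le_antisymm h1 (hptle x)
    have h3 : σ x ⊔ ψ x = ψ x := e_injective h2
    exact sup_eq_right.1 h3
  exact Filter.Eventually.filter_mono ((absolutelyContinuous_toFinite μ).ae_le) haeν

lemma exists_minorant_mul {α : Type*} [MeasurableSpace α] (μ : Measure α)
    {g : α → ℝ≥0∞} (hg : Measurable g) (hgt : ∀ x, g x ≠ ∞) (φ : α → ℝ≥0∞) :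
    ∃ ρ : α → ℝ≥0∞, Measurable ρ ∧ ρ ≤ φ ∧
      ∫⁻ x, g x * φ x ∂μ = ∫⁻ x, g x * ρ x ∂μ := by
  obtain ⟨m, hmm, hmle, hmeq⟩ := exists_measurable_le_lintegral_eq μ (fun x => g x * φ x)
  have hm0 : ∀ x, g x = 0 → m x = 0 := by
    intro x h0
    exact le_antisymm (by simpa [h0] using hmle x) zero_le
  refine ⟨fun x => m x / g x, hmm.div hg, ?_, ?_⟩
  · intro x
    rcases eq_or_ne (g x) 0 with h0 | h0
    · simp [hm0 x h0]
    · rw [ENNReal.div_le_iff h0 (hgt x), mul_comm]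
      exact hmle x
  · rw [hmeq]
    refine lintegral_congr fun x => ?_
    rcases eq_or_ne (g x) 0 with h0 | h0
    · simp [h0, hm0 x h0]
    · rw [ENNReal.mul_div_cancel h0 (hgt x)]

lemma rpow_half_sq (x : ℝ≥0∞) : (x ^ (1/2:ℝ)) ^ (2:ℝ) = x := by
  rw [← ENNReal.rpow_mul]; norm_num

lemma mul_self_rpow_half (x : ℝ≥0∞) : (x * x) ^ (1/2:ℝ) = x := by
  rw [← pow_two, ← ENNReal.rpow_natCast x 2, ← ENNReal.rpow_mul]
  norm_num

lemma rpow_two' (x : ℝ≥0∞) : x ^ (2:ℝ) = x * x := by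
  rw [show (2:ℝ) = ((2:ℕ):ℝ) by norm_num, ENNReal.rpow_natCast, pow_two]

/-- Abstract Schur test on `(0,∞)`, for arbitrary (possibly non-measurable) `φ`. -/
lemma schur_test {K : ℝ → ℝ → ℝ≥0∞} (hK : Measurable (uncurry K))
    (hKfin : ∀ r s, K r s ≠ ∞)
    {h : ℝ → ℝ≥0∞} (hh : Measurable h) (h0 : ∀ x, h x ≠ 0) (ht : ∀ x, h x ≠ ∞)
    {A : ℝ≥0∞}
    (hrow : ∀ r ∈ Ioi (0:ℝ), ∫⁻ s in Ioi (0:ℝ), K r s * h s ≤ A * h r)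
    (hcol : ∀ s ∈ Ioi (0:ℝ), ∫⁻ r in Ioi (0:ℝ), K r s * h r ≤ A * h s)
    (φ : ℝ → ℝ≥0∞) :
    ∫⁻ r in Ioi (0:ℝ), (∫⁻ s in Ioi (0:ℝ), K r s * φ s) ^ (2:ℝ) ≤
      A ^ (2:ℝ) * ∫⁻ s in Ioi (0:ℝ), φ s ^ (2:ℝ) := by
  set μ₀ : Measure ℝ := volume.restrict (Ioi 0) with hμ₀
  obtain ⟨ψ, hψm, hψφ, hψmax⟩ := exists_envelope μ₀ φ
  have hKr : ∀ r : ℝ, Measurable (K r) := fun r => hK.comp (measurable_prodMk_left)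
  have hKs : ∀ s : ℝ, Measurable (fun r => K r s) := fun s => hK.comp (measurable_prodMk_right)
  set J : ℝ → ℝ≥0∞ := fun r => ∫⁻ s, K r s * (h s)⁻¹ * ψ s ^ (2:ℝ) ∂μ₀ with hJ
  have hJm : Measurable J := by
    apply Measurable.lintegral_prod_right
    exact (hK.mul ((hh.inv).comp measurable_snd)).mul ((hψm.comp measurable_snd).pow_const _)
  -- pointwise bound for r > 0
  have key : ∀ r ∈ Ioi (0:ℝ), (∫⁻ s, K r s * φ s ∂μ₀) ^ (2:ℝ) ≤ A * h r * J r := by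
    intro r hr
    obtain ⟨ρ, hρm, hρφ, hρeq⟩ := exists_minorant_mul μ₀ (hKr r) (fun s => hKfin r s) φ
    have hρψ : ρ ≤ᵐ[μ₀] ψ := hψmax ρ hρm hρφ
    have h22 : Real.HolderConjugate 2 2 := by constructor <;> norm_num
    have hf1 : AEMeasurable (fun s => (K r s * h s) ^ (1/2:ℝ)) μ₀ :=
      (((hKr r).mul hh).pow_const _).aemeasurable
    have hf2 : AEMeasurable (fun s => (K r s * (h s)⁻¹) ^ (1/2:ℝ) * ρ s) μ₀ :=
      ((((hKr r).mul hh.inv).pow_const _).mul hρm).aemeasurable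
    have hprod : ∀ s, (K r s * h s) * (K r s * (h s)⁻¹) = K r s * K r s := by
      intro s
      calc (K r s * h s) * (K r s * (h s)⁻¹) = K r s * K r s * (h s * (h s)⁻¹) := by ring
      _ = K r s * K r s := by rw [ENNReal.mul_inv_cancel (h0 s) (ht s), mul_one]
    have hid : ∀ s, K r s * ρ s =
        ((fun s => (K r s * h s) ^ (1/2:ℝ)) * fun s => (K r s * (h s)⁻¹) ^ (1/2:ℝ) * ρ s) s := by
      intro s
      simp only [Pi.mul_apply]
      rw [← mul_assoc, ← ENNReal.mul_rpow_of_nonneg _ _ (by norm_num : (0:ℝ) ≤ 1/2),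
        hprod s, mul_self_rpow_half]
    have hCS : ∫⁻ s, K r s * ρ s ∂μ₀ ≤
        (∫⁻ s, K r s * h s ∂μ₀) ^ (1/2:ℝ) *
        (∫⁻ s, K r s * (h s)⁻¹ * ρ s ^ (2:ℝ) ∂μ₀) ^ (1/2:ℝ) := by
      calc ∫⁻ s, K r s * ρ s ∂μ₀
          = ∫⁻ s, ((fun s => (K r s * h s) ^ (1/2:ℝ)) * fun s => (K r s * (h s)⁻¹) ^ (1/2:ℝ) * ρ s) s ∂μ₀ :=
            lintegral_congr hid
        _ ≤ _ := by
            refine le_trans (ENNReal.lintegral_mul_le_Lp_mul_Lq μ₀ h22 hf1 hf2) (le_of_eq ?_)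
            congr 1
            · congr 1
              exact lintegral_congr fun s => rpow_half_sq _
            · congr 1
              refine lintegral_congr fun s => ?_
              rw [ENNReal.mul_rpow_of_nonneg _ _ (by norm_num : (0:ℝ) ≤ 2), rpow_half_sq]
    calc (∫⁻ s, K r s * φ s ∂μ₀) ^ (2:ℝ)
        = (∫⁻ s, K r s * ρ s ∂μ₀) ^ (2:ℝ) := by rw [hρeq]
      _ ≤ ((A * h r) ^ (1/2:ℝ) * (J r) ^ (1/2:ℝ)) ^ (2:ℝ) := by
          refine ENNReal.rpow_le_rpow (le_trans hCS (mul_le_mul' ?_ ?_)) (by norm_num)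
          · exact ENNReal.rpow_le_rpow (hrow r hr) (by norm_num)
          · refine ENNReal.rpow_le_rpow (lintegral_mono_ae ?_) (by norm_num)
            filter_upwards [hρψ] with s hs
            exact mul_le_mul_right (ENNReal.rpow_le_rpow hs (by norm_num)) _
      _ = A * h r * J r := by
          rw [← ENNReal.mul_rpow_of_nonneg _ _ (by norm_num : (0:ℝ) ≤ 1/2), rpow_half_sq]
  -- integrate and swap
  have swapint : ∫⁻ r, h r * J r ∂μ₀ = ∫⁻ s, (∫⁻ r, K r s * h r ∂μ₀) * ((h s)⁻¹ * ψ s ^ (2:ℝ)) ∂μ₀ := by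
    have hswap : ∫⁻ r, ∫⁻ s, h r * (K r s * ((h s)⁻¹ * ψ s ^ (2:ℝ))) ∂μ₀ ∂μ₀
        = ∫⁻ s, ∫⁻ r, h r * (K r s * ((h s)⁻¹ * ψ s ^ (2:ℝ))) ∂μ₀ ∂μ₀ := by
      refine lintegral_lintegral_swap ?_
      refine Measurable.aemeasurable ?_
      exact (hh.comp measurable_fst).mul (hK.mul (((hh.inv).comp measurable_snd).mul
        ((hψm.comp measurable_snd).pow_const _)))
    calc ∫⁻ r, h r * J r ∂μ₀
        = ∫⁻ r, ∫⁻ s, h r * (K r s * ((h s)⁻¹ * ψ s ^ (2:ℝ))) ∂μ₀ ∂μ₀ := by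
          refine lintegral_congr fun r => ?_
          rw [hJ]
          beta_reduce
          rw [← lintegral_const_mul (f := fun s => K r s * (h s)⁻¹ * ψ s ^ (2:ℝ)) (h r) ((((hKr r).mul hh.inv)).mul (hψm.pow_const _))]
          exact lintegral_congr fun s => by ring_nf
      _ = ∫⁻ s, ∫⁻ r, h r * (K r s * ((h s)⁻¹ * ψ s ^ (2:ℝ))) ∂μ₀ ∂μ₀ := hswap
      _ = ∫⁻ s, (∫⁻ r, K r s * h r ∂μ₀) * ((h s)⁻¹ * ψ s ^ (2:ℝ)) ∂μ₀ := by
          refine lintegral_congr fun s => ?_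
          rw [← lintegral_mul_const (f := fun r => K r s * h r) _ ((hKs s).mul hh)]
          exact lintegral_congr fun r => by ring
  calc ∫⁻ r, (∫⁻ s, K r s * φ s ∂μ₀) ^ (2:ℝ) ∂μ₀
      ≤ ∫⁻ r, A * h r * J r ∂μ₀ := setLIntegral_mono ((measurable_const.mul hh).mul hJm) key
    _ = A * ∫⁻ r, h r * J r ∂μ₀ := by
        simp_rw [mul_assoc]
        exact lintegral_const_mul A (hh.mul hJm)
    _ = A * ∫⁻ s, (∫⁻ r, K r s * h r ∂μ₀) * ((h s)⁻¹ * ψ s ^ (2:ℝ)) ∂μ₀ := by rw [swapint]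
    _ ≤ A * ∫⁻ s, A * ψ s ^ (2:ℝ) ∂μ₀ := by
        refine mul_le_mul_right ?_ A
        refine setLIntegral_mono (measurable_const.mul (hψm.pow_const _)) ?_
        intro s hs
        calc (∫⁻ r, K r s * h r ∂μ₀) * ((h s)⁻¹ * ψ s ^ (2:ℝ))
            ≤ (A * h s) * ((h s)⁻¹ * ψ s ^ (2:ℝ)) := mul_le_mul_left (hcol s hs) _
          _ = A * ψ s ^ (2:ℝ) * (h s * (h s)⁻¹) := by ring
          _ = A * ψ s ^ (2:ℝ) := by rw [ENNReal.mul_inv_cancel (h0 s) (ht s), mul_one]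
    _ = A ^ (2:ℝ) * ∫⁻ s, ψ s ^ (2:ℝ) ∂μ₀ := by
        rw [lintegral_const_mul A (hψm.pow_const _), ← mul_assoc, ← rpow_two']
    _ ≤ A ^ (2:ℝ) * ∫⁻ s, φ s ^ (2:ℝ) ∂μ₀ := by
        refine mul_le_mul_right (lintegral_mono fun s => ?_) _
        exact ENNReal.rpow_le_rpow (hψφ s) (by norm_num)

lemma one_le_w (a x : ℝ) : 1 ≤ Real.sqrt (1 + (a*x)^2) := by
  rw [Real.one_le_sqrt]
  exact le_add_of_nonneg_right (sq_nonneg _)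

lemma w_pos (a x : ℝ) : 0 < Real.sqrt (1 + (a*x)^2) :=
  lt_of_lt_of_le one_pos (one_le_w a x)

lemma ax_le_w {a x : ℝ} (h : 0 ≤ a*x) : a*x ≤ Real.sqrt (1 + (a*x)^2) := by
  calc a*x = Real.sqrt ((a*x)^2) := (Real.sqrt_sq h).symm
  _ ≤ _ := Real.sqrt_le_sqrt (le_add_of_nonneg_left zero_le_one)

lemma w_le_sqrt2_mul {a x : ℝ} (h1 : 1 ≤ a*x) : Real.sqrt (1 + (a*x)^2) ≤ Real.sqrt 2 * (a*x) := by
  have h0 : (0:ℝ) ≤ a*x := le_trans zero_le_one h1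
  calc Real.sqrt (1 + (a*x)^2) ≤ Real.sqrt (2 * (a*x)^2) := Real.sqrt_le_sqrt (by nlinarith)
  _ = Real.sqrt 2 * (a*x) := by rw [Real.sqrt_mul (by norm_num), Real.sqrt_sq h0]

lemma w_le_sqrt2 {a x : ℝ} (h1 : a*x ≤ 1) (h0 : 0 ≤ a*x) : Real.sqrt (1 + (a*x)^2) ≤ Real.sqrt 2 :=
  Real.sqrt_le_sqrt (by nlinarith)

lemma w_mono {a x y : ℝ} (ha : 0 < a) (hx : 0 ≤ x) (hxy : x ≤ y) :
    Real.sqrt (1 + (a*x)^2) ≤ Real.sqrt (1 + (a*y)^2) := by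
  apply Real.sqrt_le_sqrt
  have h1 : 0 ≤ a*x := by positivity
  have h2 : a*x ≤ a*y := by nlinarith
  nlinarith [pow_le_pow_left₀ h1 h2 2]

lemma w_cont (a : ℝ) : Continuous fun x : ℝ => Real.sqrt (1 + (a*x)^2) := by
  apply Real.continuous_sqrt.comp
  continuity

lemma w_rpow_meas (a c : ℝ) : Measurable fun s : ℝ => ENNReal.ofReal (Real.sqrt (1 + (a*s)^2) ^ c) :=
  (((w_cont a).rpow_const (fun x => Or.inl (w_pos a x).ne')).measurable).ennreal_ofReal

lemma tail_rpow {a q c : ℝ} (ha : 0 < a) (hq : 0 < q) (hc : 0 < c) :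
    ∫⁻ s in Ioi c, ENNReal.ofReal ((a*s) ^ (-1-q)) =
      ENNReal.ofReal (a ^ (-1-q) * (c ^ (-q) / q)) := by
  have hcong : ∫⁻ s in Ioi c, ENNReal.ofReal ((a*s) ^ (-1-q)) =
      ∫⁻ s in Ioi c, ENNReal.ofReal (a ^ (-1-q)) * ENNReal.ofReal (s ^ (-1-q)) := by
    refine setLIntegral_congr_fun measurableSet_Ioi (fun s hs => ?_)
    rw [Real.mul_rpow ha.le (le_of_lt (hc.trans hs)),
      ENNReal.ofReal_mul (Real.rpow_nonneg ha.le _)]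
  have hmeas : Measurable fun s : ℝ => ENNReal.ofReal (s ^ (-1-q)) :=
    (measurable_id.pow measurable_const).ennreal_ofReal
  have hint : IntegrableOn (fun s : ℝ => s ^ (-1-q)) (Ioi c) :=
    integrableOn_Ioi_rpow_of_lt (by linarith) hc
  have hnn : 0 ≤ᵐ[volume.restrict (Ioi c)] fun s : ℝ => s ^ (-1-q) := by
    filter_upwards [ae_restrict_mem measurableSet_Ioi] with s hs
    exact Real.rpow_nonneg (le_of_lt (hc.trans hs)) _
  rw [hcong, lintegral_const_mul _ hmeas, ← ofReal_integral_eq_lintegral_ofReal hint hnn,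
    integral_Ioi_rpow_of_lt (by linarith) hc,
    ← ENNReal.ofReal_mul (Real.rpow_nonneg ha.le _)]
  congr 1
  rw [show (-1 - q + 1 : ℝ) = -q by ring, neg_div_neg_eq]

lemma head_rpow {p c : ℝ} (hp : -1 < p) (hc : 0 < c) :
    ∫⁻ s in Ioc 0 c, ENNReal.ofReal (s ^ p) = ENNReal.ofReal (c ^ (p+1) / (p+1)) := by
  have hint : IntegrableOn (fun s : ℝ => s ^ p) (Ioc 0 c) :=
    (intervalIntegral.intervalIntegrable_rpow' hp).1
  have hnn : 0 ≤ᵐ[volume.restrict (Ioc 0 c)] fun s : ℝ => s ^ p := by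
    filter_upwards [ae_restrict_mem measurableSet_Ioc] with s hs
    exact Real.rpow_nonneg hs.1.le _
  rw [← ofReal_integral_eq_lintegral_ofReal hint hnn]
  congr 1
  rw [← intervalIntegral.integral_of_le hc.le, integral_rpow (Or.inl hp),
    Real.zero_rpow (by linarith), sub_zero]

lemma w_rpow_meas_real (a c : ℝ) : Measurable fun s : ℝ => Real.sqrt (1 + (a*s)^2) ^ c :=
  ((w_cont a).rpow_const fun x => Or.inl (w_pos a x).ne').measurable

lemma sq_rpow_half (x : ℝ≥0∞) : (x ^ (2:ℝ)) ^ (1/2:ℝ) = x := by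
  rw [← ENNReal.rpow_mul]; norm_num

lemma sqrt_two_rpow_neg (q : ℝ) : Real.sqrt 2 ^ (-q) = (2:ℝ) ^ (-(q/2)) := by
  rw [Real.sqrt_eq_rpow, ← Real.rpow_mul (by norm_num : (0:ℝ) ≤ 2)]
  ring_nf

lemma two_rpow_cancel (q : ℝ) : (2:ℝ) ^ (q/2) * (2:ℝ) ^ (-(q/2)) = 1 := by
  rw [← Real.rpow_add (by norm_num : (0:ℝ) < 2)]
  simp

lemma tail_bound {a q r : ℝ} (ha : 0 < a) (hq : 0 < q) (hr : 0 < r) :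
    ∫⁻ s in Ioi r, ENNReal.ofReal (Real.sqrt (1+(a*s)^2) ^ (-1-q)) ≤
      ENNReal.ofReal ((2:ℝ) ^ (q/2) * (1+1/q) / a * Real.sqrt (1+(a*r)^2) ^ (-q)) := by
  have hu : (0:ℝ) < Real.sqrt (1+(a*r)^2) := w_pos a r
  have hptw : ∀ s : ℝ, 0 < s →
      ENNReal.ofReal (Real.sqrt (1+(a*s)^2) ^ (-1-q)) ≤ ENNReal.ofReal ((a*s) ^ (-1-q)) := by
    intro s hs
    apply ENNReal.ofReal_le_ofReal
    exact Real.rpow_le_rpow_of_nonpos (by positivity) (ax_le_w (by positivity)) (by linarith)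
  have hmono : ∀ c : ℝ, 0 < c → ∫⁻ s in Ioi c, ENNReal.ofReal (Real.sqrt (1+(a*s)^2) ^ (-1-q)) ≤
      ENNReal.ofReal (a ^ (-1-q) * (c ^ (-q) / q)) := by
    intro c hc
    rw [← tail_rpow ha hq hc]
    refine setLIntegral_mono ((measurable_id.const_mul a).pow measurable_const).ennreal_ofReal
      fun s hs => hptw s (hc.trans hs)
  rcases le_or_gt 1 (a*r) with h1 | h1
  · -- a*r ≥ 1
    refine le_trans (hmono r hr) (ENNReal.ofReal_le_ofReal ?_)
    have ht : (0:ℝ) < a*r := by positivity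
    have e1 : a^(-1-q) * (r^(-q)/q) = (a*r)^(-q) / (a*q) := by
      rw [Real.mul_rpow ha.le hr.le, show (-1-q:ℝ) = -q + (-1) by ring, Real.rpow_add ha,
        Real.rpow_neg_one]
      field_simp
    have e2 : (a*r)^(-q) ≤ 2^(q/2) * (Real.sqrt (1+(a*r)^2))^(-q) := by
      have h3 : (Real.sqrt 2 * (a*r))^(-q) ≤ (Real.sqrt (1+(a*r)^2))^(-q) :=
        Real.rpow_le_rpow_of_nonpos hu (w_le_sqrt2_mul h1) (by linarith)
      have h4 : (Real.sqrt 2 * (a*r))^(-q) = 2^(-(q/2)) * (a*r)^(-q) := by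
        rw [Real.mul_rpow (Real.sqrt_nonneg 2) ht.le, sqrt_two_rpow_neg]
      calc (a*r)^(-q) = 2^(q/2) * (2^(-(q/2)) * (a*r)^(-q)) := by
            rw [← mul_assoc, two_rpow_cancel, one_mul]
        _ ≤ 2^(q/2) * (Real.sqrt (1+(a*r)^2))^(-q) := by
            refine mul_le_mul_of_nonneg_left ?_ (Real.rpow_nonneg (by norm_num) _)
            rw [← h4]; exact h3
    rw [e1, div_le_iff₀ (by positivity : (0:ℝ) < a*q)]
    calc (a*r)^(-q) ≤ 2^(q/2) * (Real.sqrt (1+(a*r)^2))^(-q) := e2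
      _ ≤ 2^(q/2) * (Real.sqrt (1+(a*r)^2))^(-q) * (q+1) := by
          refine le_mul_of_one_le_right (by positivity) (by linarith)
      _ = 2^(q/2) * (1+1/q) / a * Real.sqrt (1+(a*r)^2) ^ (-q) * (a*q) := by
          field_simp
  · -- a*r < 1
    have hia : (0:ℝ) < 1/a := by positivity
    have hsub : ∫⁻ s in Ioi r, ENNReal.ofReal (Real.sqrt (1+(a*s)^2) ^ (-1-q)) ≤
        ∫⁻ s in Ioi 0, ENNReal.ofReal (Real.sqrt (1+(a*s)^2) ^ (-1-q)) :=
      lintegral_mono' (Measure.restrict_mono (Ioi_subset_Ioi hr.le) le_rfl) le_rfl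
    have hsplit : ∫⁻ s in Ioi (0:ℝ), ENNReal.ofReal (Real.sqrt (1+(a*s)^2) ^ (-1-q)) =
        (∫⁻ s in Ioc 0 (1/a), ENNReal.ofReal (Real.sqrt (1+(a*s)^2) ^ (-1-q))) +
        ∫⁻ s in Ioi (1/a), ENNReal.ofReal (Real.sqrt (1+(a*s)^2) ^ (-1-q)) := by
      rw [← Ioc_union_Ioi_eq_Ioi hia.le, lintegral_union measurableSet_Ioi (Ioc_disjoint_Ioi le_rfl)]
    have hp1 : ∫⁻ s in Ioc 0 (1/a), ENNReal.ofReal (Real.sqrt (1+(a*s)^2) ^ (-1-q)) ≤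
        ENNReal.ofReal (1/a) := by
      calc ∫⁻ s in Ioc 0 (1/a), ENNReal.ofReal (Real.sqrt (1+(a*s)^2) ^ (-1-q))
          ≤ ∫⁻ _ in Ioc 0 (1/a), (1:ℝ≥0∞) := by
            refine setLIntegral_mono' measurableSet_Ioc fun s hs => ?_
            refine le_trans (ENNReal.ofReal_le_ofReal
              (Real.rpow_le_one_of_one_le_of_nonpos (one_le_w a s) (by linarith))) (by simp)
        _ = ENNReal.ofReal (1/a) := by
            rw [setLIntegral_const, one_mul, Real.volume_Ioc, sub_zero]
    have hp2 : ∫⁻ s in Ioi (1/a), ENNReal.ofReal (Real.sqrt (1+(a*s)^2) ^ (-1-q)) ≤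
        ENNReal.ofReal (1/(a*q)) := by
      refine le_trans (hmono (1/a) hia) (le_of_eq ?_)
      congr 1
      have h5 : (0:ℝ) < a^q := Real.rpow_pos_of_pos ha q
      rw [one_div, Real.inv_rpow ha.le, Real.rpow_neg ha.le, inv_inv,
        show (-1-q:ℝ) = -q + (-1) by ring, Real.rpow_add ha, Real.rpow_neg_one,
        Real.rpow_neg ha.le]
      field_simp
    have hfinal : (1/a : ℝ) + 1/(a*q) ≤ 2^(q/2)*(1+1/q)/a * Real.sqrt (1+(a*r)^2) ^ (-q) := by
      have h6 : (2:ℝ)^(-(q/2)) ≤ Real.sqrt (1+(a*r)^2) ^ (-q) := by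
        rw [← sqrt_two_rpow_neg]
        exact Real.rpow_le_rpow_of_nonpos hu (w_le_sqrt2 h1.le (by positivity)) (by linarith)
      calc (1/a : ℝ) + 1/(a*q) = 2^(q/2)*(1+1/q)/a * 2^(-(q/2)) := by
            rw [div_mul_eq_mul_div, mul_comm ((2:ℝ)^(q/2)) (1+1/q), mul_assoc, two_rpow_cancel,
              mul_one]
            field_simp
        _ ≤ _ := mul_le_mul_of_nonneg_left h6 (by positivity)
    calc ∫⁻ s in Ioi r, ENNReal.ofReal (Real.sqrt (1+(a*s)^2) ^ (-1-q))
        ≤ ENNReal.ofReal (1/a) + ENNReal.ofReal (1/(a*q)) := by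
          rw [hsplit] at hsub
          exact le_trans hsub (add_le_add hp1 hp2)
      _ = ENNReal.ofReal (1/a + 1/(a*q)) := by
          rw [ENNReal.ofReal_add (by positivity) (by positivity)]
      _ ≤ _ := ENNReal.ofReal_le_ofReal hfinal

lemma head_bound {a p r : ℝ} (ha : 0 < a) (hp : -1 < p) (hr : 0 < r) :
    ∫⁻ s in Ioc 0 r, ENNReal.ofReal (Real.sqrt (1+(a*s)^2) ^ p) ≤
      ENNReal.ofReal ((1 + (p+1)⁻¹) / a * Real.sqrt (1+(a*r)^2) ^ (p+1)) := by
  have hu : (0:ℝ) < Real.sqrt (1+(a*r)^2) := w_pos a r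
  have hp1 : (0:ℝ) < p + 1 := by linarith
  rcases le_or_gt 0 p with hp0 | hp0
  · calc ∫⁻ s in Ioc 0 r, ENNReal.ofReal (Real.sqrt (1+(a*s)^2) ^ p)
        ≤ ∫⁻ _ in Ioc 0 r, ENNReal.ofReal (Real.sqrt (1+(a*r)^2) ^ p) := by
          refine setLIntegral_mono' measurableSet_Ioc fun s hs => ENNReal.ofReal_le_ofReal ?_
          exact Real.rpow_le_rpow (Real.sqrt_nonneg _) (w_mono ha hs.1.le hs.2) hp0
      _ = ENNReal.ofReal (Real.sqrt (1+(a*r)^2) ^ p * r) := by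
          rw [setLIntegral_const, Real.volume_Ioc, sub_zero,
            ← ENNReal.ofReal_mul (Real.rpow_nonneg (Real.sqrt_nonneg _) _)]
      _ ≤ _ := by
          apply ENNReal.ofReal_le_ofReal
          have h1 : r ≤ Real.sqrt (1+(a*r)^2) / a := by
            rw [le_div_iff₀ ha, mul_comm]
            exact ax_le_w (by positivity)
          calc Real.sqrt (1+(a*r)^2) ^ p * r
              ≤ Real.sqrt (1+(a*r)^2) ^ p * (Real.sqrt (1+(a*r)^2) / a) :=
                mul_le_mul_of_nonneg_left h1 (Real.rpow_nonneg (Real.sqrt_nonneg _) _)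
            _ = Real.sqrt (1+(a*r)^2) ^ (p+1) / a := by
                rw [Real.rpow_add_one hu.ne']
                ring
            _ ≤ _ := by
                have hW : (0:ℝ) ≤ Real.sqrt (1+(a*r)^2) ^ (p+1) / a := by positivity
                have hone : (1:ℝ) ≤ 1 + (p+1)⁻¹ := by
                  have : 0 < (p+1)⁻¹ := inv_pos.2 hp1
                  linarith
                calc Real.sqrt (1+(a*r)^2) ^ (p+1) / a
                    ≤ (1+(p+1)⁻¹) * (Real.sqrt (1+(a*r)^2) ^ (p+1) / a) :=
                      le_mul_of_one_le_left hW hone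
                  _ = (1 + (p+1)⁻¹)/a * Real.sqrt (1+(a*r)^2) ^ (p+1) := by ring
  · have hq0 : (0:ℝ) ≤ p+1 := hp1.le
    calc ∫⁻ s in Ioc 0 r, ENNReal.ofReal (Real.sqrt (1+(a*s)^2) ^ p)
        ≤ ∫⁻ s in Ioc 0 r, ENNReal.ofReal (a^p) * ENNReal.ofReal (s ^ p) := by
          refine setLIntegral_mono' measurableSet_Ioc fun s hs => ?_
          rw [← ENNReal.ofReal_mul (Real.rpow_nonneg ha.le _), ← Real.mul_rpow ha.le hs.1.le]
          exact ENNReal.ofReal_le_ofReal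
            (Real.rpow_le_rpow_of_nonpos (mul_pos ha hs.1) (ax_le_w (mul_pos ha hs.1).le) hp0.le)
      _ = ENNReal.ofReal (a^p) * ENNReal.ofReal (r^(p+1)/(p+1)) := by
          rw [lintegral_const_mul _ (measurable_id'.pow measurable_const).ennreal_ofReal,
            head_rpow hp hr]
      _ ≤ _ := by
          rw [← ENNReal.ofReal_mul (Real.rpow_nonneg ha.le _)]
          apply ENNReal.ofReal_le_ofReal
          have harp : (a*r) ^ (p+1) ≤ Real.sqrt (1+(a*r)^2) ^ (p+1) :=
            Real.rpow_le_rpow (by positivity) (ax_le_w (by positivity)) hq0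
          have e3 : a^p * (r^(p+1)/(p+1)) = (a*r)^(p+1) / (a*(p+1)) := by
            rw [Real.mul_rpow ha.le hr.le, Real.rpow_add_one ha.ne' p]
            field_simp
          rw [e3, div_le_iff₀ (by positivity : (0:ℝ) < a*(p+1))]
          calc (a*r)^(p+1) ≤ Real.sqrt (1+(a*r)^2) ^ (p+1) := harp
            _ ≤ Real.sqrt (1+(a*r)^2) ^ (p+1) * (p+2) :=
                le_mul_of_one_le_right (by positivity) (by linarith)
            _ = (1+(p+1)⁻¹)/a * Real.sqrt (1+(a*r)^2)^(p+1) * (a*(p+1)) := by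
                field_simp
                ring

lemma row_bound {b C a : ℝ} (hb : 0 < b) (hC : 0 < C) (ha : 0 < a) {r : ℝ} (hr : 0 < r) :
    ∫⁻ s in Ioi (0:ℝ),
      ENNReal.ofReal (C * a * (if s ≤ r
        then Real.sqrt (1+(a*r)^2) ^ (-(1/2) - b/2) * Real.sqrt (1+(a*s)^2) ^ (-(1/2) + b/2)
        else Real.sqrt (1+(a*r)^2) ^ (-(1/2) + b/2) * Real.sqrt (1+(a*s)^2) ^ (-(1/2) - b/2))) *
      ENNReal.ofReal (Real.sqrt (1+(a*s)^2) ^ (-(1/2):ℝ)) ≤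
      ENNReal.ofReal (C * ((2:ℝ)^(b/4) * (1+2/b) + (1+2/b))) *
      ENNReal.ofReal (Real.sqrt (1+(a*r)^2) ^ (-(1/2):ℝ)) := by
  have hWr := w_pos a r
  rw [← Ioc_union_Ioi_eq_Ioi hr.le, lintegral_union measurableSet_Ioi (Ioc_disjoint_Ioi le_rfl)]
  have piece1 : ∫⁻ s in Ioc (0:ℝ) r,
      ENNReal.ofReal (C * a * (if s ≤ r
        then Real.sqrt (1+(a*r)^2) ^ (-(1/2) - b/2) * Real.sqrt (1+(a*s)^2) ^ (-(1/2) + b/2)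
        else Real.sqrt (1+(a*r)^2) ^ (-(1/2) + b/2) * Real.sqrt (1+(a*s)^2) ^ (-(1/2) - b/2))) *
      ENNReal.ofReal (Real.sqrt (1+(a*s)^2) ^ (-(1/2):ℝ)) ≤
      ENNReal.ofReal (C * (1+2/b) * Real.sqrt (1+(a*r)^2) ^ (-(1/2):ℝ)) := by
    have hcong : ∀ s ∈ Ioc (0:ℝ) r,
        ENNReal.ofReal (C * a * (if s ≤ r
          then Real.sqrt (1+(a*r)^2) ^ (-(1/2) - b/2) * Real.sqrt (1+(a*s)^2) ^ (-(1/2) + b/2)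
          else Real.sqrt (1+(a*r)^2) ^ (-(1/2) + b/2) * Real.sqrt (1+(a*s)^2) ^ (-(1/2) - b/2))) *
        ENNReal.ofReal (Real.sqrt (1+(a*s)^2) ^ (-(1/2):ℝ)) =
        ENNReal.ofReal (C * a * Real.sqrt (1+(a*r)^2) ^ (-(1/2) - b/2)) *
        ENNReal.ofReal (Real.sqrt (1+(a*s)^2) ^ (b/2 - 1)) := by
      intro s hs
      rw [if_pos hs.2, ← ENNReal.ofReal_mul (by positivity), ← ENNReal.ofReal_mul (by positivity)]
      congr 1
      have e2 : Real.sqrt (1+(a*s)^2) ^ (-(1/2) + b/2) * Real.sqrt (1+(a*s)^2) ^ (-(1/2):ℝ) =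
          Real.sqrt (1+(a*s)^2) ^ (b/2 - 1) := by
        rw [← Real.rpow_add (w_pos a s)]; congr 1; ring
      rw [← e2]
      ring
    calc ∫⁻ s in Ioc (0:ℝ) r, _ = ∫⁻ s in Ioc (0:ℝ) r,
          ENNReal.ofReal (C * a * Real.sqrt (1+(a*r)^2) ^ (-(1/2) - b/2)) *
          ENNReal.ofReal (Real.sqrt (1+(a*s)^2) ^ (b/2 - 1)) :=
        setLIntegral_congr_fun measurableSet_Ioc hcong
      _ = ENNReal.ofReal (C * a * Real.sqrt (1+(a*r)^2) ^ (-(1/2) - b/2)) *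
          ∫⁻ s in Ioc (0:ℝ) r, ENNReal.ofReal (Real.sqrt (1+(a*s)^2) ^ (b/2 - 1)) :=
        lintegral_const_mul _ (w_rpow_meas a _)
      _ ≤ ENNReal.ofReal (C * a * Real.sqrt (1+(a*r)^2) ^ (-(1/2) - b/2)) *
          ENNReal.ofReal ((1 + (2/b)) / a * Real.sqrt (1+(a*r)^2) ^ (b/2)) := by
        refine mul_le_mul_right ?_ _
        have h := head_bound (a := a) (p := b/2 - 1) (r := r) ha (by linarith) hr
        rw [show (b/2 - 1 + 1 : ℝ) = b/2 by ring, show ((b/2 : ℝ))⁻¹ = 2/b by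
          rw [inv_div]] at h
        exact h
      _ = ENNReal.ofReal (C * (1+2/b) * Real.sqrt (1+(a*r)^2) ^ (-(1/2):ℝ)) := by
        rw [← ENNReal.ofReal_mul (by positivity)]
        congr 1
        have e3 : Real.sqrt (1+(a*r)^2) ^ (-(1/2) - b/2) * Real.sqrt (1+(a*r)^2) ^ (b/2) =
            Real.sqrt (1+(a*r)^2) ^ (-(1/2):ℝ) := by
          rw [← Real.rpow_add hWr]; congr 1; ring
        rw [← e3]
        field_simp
  have piece2 : ∫⁻ s in Ioi r,
      ENNReal.ofReal (C * a * (if s ≤ r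
        then Real.sqrt (1+(a*r)^2) ^ (-(1/2) - b/2) * Real.sqrt (1+(a*s)^2) ^ (-(1/2) + b/2)
        else Real.sqrt (1+(a*r)^2) ^ (-(1/2) + b/2) * Real.sqrt (1+(a*s)^2) ^ (-(1/2) - b/2))) *
      ENNReal.ofReal (Real.sqrt (1+(a*s)^2) ^ (-(1/2):ℝ)) ≤
      ENNReal.ofReal (C * ((2:ℝ)^(b/4) * (1+2/b)) * Real.sqrt (1+(a*r)^2) ^ (-(1/2):ℝ)) := by
    have hcong : ∀ s ∈ Ioi r,
        ENNReal.ofReal (C * a * (if s ≤ r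
          then Real.sqrt (1+(a*r)^2) ^ (-(1/2) - b/2) * Real.sqrt (1+(a*s)^2) ^ (-(1/2) + b/2)
          else Real.sqrt (1+(a*r)^2) ^ (-(1/2) + b/2) * Real.sqrt (1+(a*s)^2) ^ (-(1/2) - b/2))) *
        ENNReal.ofReal (Real.sqrt (1+(a*s)^2) ^ (-(1/2):ℝ)) =
        ENNReal.ofReal (C * a * Real.sqrt (1+(a*r)^2) ^ (-(1/2) + b/2)) *
        ENNReal.ofReal (Real.sqrt (1+(a*s)^2) ^ (-1 - b/2)) := by
      intro s hs
      rw [if_neg (not_le.2 hs), ← ENNReal.ofReal_mul (by positivity),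
        ← ENNReal.ofReal_mul (by positivity)]
      congr 1
      have e2 : Real.sqrt (1+(a*s)^2) ^ (-(1/2) - b/2) * Real.sqrt (1+(a*s)^2) ^ (-(1/2):ℝ) =
          Real.sqrt (1+(a*s)^2) ^ (-1 - b/2) := by
        rw [← Real.rpow_add (w_pos a s)]; congr 1; ring
      rw [← e2]
      ring
    calc ∫⁻ s in Ioi r, _ = ∫⁻ s in Ioi r,
          ENNReal.ofReal (C * a * Real.sqrt (1+(a*r)^2) ^ (-(1/2) + b/2)) *
          ENNReal.ofReal (Real.sqrt (1+(a*s)^2) ^ (-1 - b/2)) :=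
        setLIntegral_congr_fun measurableSet_Ioi hcong
      _ = ENNReal.ofReal (C * a * Real.sqrt (1+(a*r)^2) ^ (-(1/2) + b/2)) *
          ∫⁻ s in Ioi r, ENNReal.ofReal (Real.sqrt (1+(a*s)^2) ^ (-1 - b/2)) :=
        lintegral_const_mul _ (w_rpow_meas a _)
      _ ≤ ENNReal.ofReal (C * a * Real.sqrt (1+(a*r)^2) ^ (-(1/2) + b/2)) *
          ENNReal.ofReal ((2:ℝ)^(b/4) * (1+2/b) / a * Real.sqrt (1+(a*r)^2) ^ (-(b/2))) := by
        refine mul_le_mul_right ?_ _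
        have h := tail_bound (a := a) (q := b/2) (r := r) ha (by linarith) hr
        rw [show ((b/2 : ℝ))/2 = b/4 by ring, show (1:ℝ)/(b/2) = 2/b by rw [one_div, inv_div]] at h
        exact h
      _ = ENNReal.ofReal (C * ((2:ℝ)^(b/4) * (1+2/b)) * Real.sqrt (1+(a*r)^2) ^ (-(1/2):ℝ)) := by
        rw [← ENNReal.ofReal_mul (by positivity)]
        congr 1
        have e4 : Real.sqrt (1+(a*r)^2) ^ (-(1/2) + b/2) * Real.sqrt (1+(a*r)^2) ^ (-(b/2)) =
            Real.sqrt (1+(a*r)^2) ^ (-(1/2):ℝ) := by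
          rw [← Real.rpow_add hWr]; congr 1; ring
        rw [← e4]
        field_simp
  refine le_trans (add_le_add piece1 piece2) (le_of_eq ?_)
  rw [← ENNReal.ofReal_add (by positivity) (by positivity),
    ← ENNReal.ofReal_mul (by positivity)]
  congr 1
  ring

end Stmt14

open Stmt14 Function
open scoped ENNReal

/-- If `|G(r,s,ω)| ≤ C ω^{-1/2}⟨ω^{-1/2}r⟩^{-1/2±b/2}⟨ω^{-1/2}s⟩^{-1/2∓b/2}` then the
operator `f ↦ ∫₀^∞ G(·,s,ω) f(s) ds` is bounded on `L²(0,∞)` uniformly in `ω > 0`. -/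
theorem stmt14 (b : ℝ) (hb : 0 < b) (C : ℝ) (hC : 0 < C) :
    ∃ C' : ℝ, 0 < C' ∧ ∀ ω : ℝ, 0 < ω → ∀ G : ℝ → ℝ → ℂ, Measurable (Function.uncurry G) →
      (∀ r s : ℝ, 0 < r → 0 < s → r ≤ s →
        ‖G r s‖ ≤ C * ω ^ (-(1/2) : ℝ) *
          Real.sqrt (1 + (ω ^ (-(1/2) : ℝ) * r)^2) ^ (-(1/2) + b/2) *
          Real.sqrt (1 + (ω ^ (-(1/2) : ℝ) * s)^2) ^ (-(1/2) - b/2)) →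
      (∀ r s : ℝ, 0 < r → 0 < s → s ≤ r →
        ‖G r s‖ ≤ C * ω ^ (-(1/2) : ℝ) *
          Real.sqrt (1 + (ω ^ (-(1/2) : ℝ) * r)^2) ^ (-(1/2) - b/2) *
          Real.sqrt (1 + (ω ^ (-(1/2) : ℝ) * s)^2) ^ (-(1/2) + b/2)) →
      ∀ f : ℝ → ℂ,
        eLpNorm (fun r => ∫ s in Ioi (0:ℝ), G r s * f s) 2 (volume.restrict (Ioi 0)) ≤
          ENNReal.ofReal C' * eLpNorm f 2 (volume.restrict (Ioi 0)) := by
  refine ⟨C * ((2:ℝ)^(b/4) * (1+2/b) + (1+2/b)), by positivity, ?_⟩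
  intro ω hω G hG hyp1 hyp2 f
  set a : ℝ := ω ^ (-(1/2) : ℝ) with hadef
  have ha : 0 < a := Real.rpow_pos_of_pos hω _
  set h : ℝ → ℝ≥0∞ := fun x => ENNReal.ofReal (Real.sqrt (1+(a*x)^2) ^ (-(1/2):ℝ)) with hhdef
  have hhm : Measurable h := w_rpow_meas a _
  have hh0 : ∀ x, h x ≠ 0 := by
    intro x
    simp only [hhdef, ne_eq, ENNReal.ofReal_eq_zero, not_le]
    positivity
  have hht : ∀ x, h x ≠ ∞ := fun x => ENNReal.ofReal_ne_top
  set K : ℝ → ℝ → ℝ≥0∞ := fun r s => (‖G r s‖₊ : ℝ≥0∞) with hKdef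
  have hKm : Measurable (uncurry K) := by
    have he : uncurry K = fun p : ℝ × ℝ => (‖uncurry G p‖₊ : ℝ≥0∞) := rfl
    rw [he]
    exact hG.nnnorm.coe_nnreal_ennreal
  have hKfin : ∀ r s, K r s ≠ ∞ := fun r s => ENNReal.coe_ne_top
  -- the dominating kernel, as a function of (fixed first var r, integration var x)
  have hKb : ∀ r s : ℝ, 0 < r → 0 < s → K r s ≤ ENNReal.ofReal (C * a * (if s ≤ r
      then Real.sqrt (1+(a*r)^2) ^ (-(1/2) - b/2) * Real.sqrt (1+(a*s)^2) ^ (-(1/2) + b/2)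
      else Real.sqrt (1+(a*r)^2) ^ (-(1/2) + b/2) * Real.sqrt (1+(a*s)^2) ^ (-(1/2) - b/2))) := by
    intro r s hr hs
    have hnorm : K r s = ENNReal.ofReal (‖G r s‖) := by
      rw [hKdef, ofReal_norm_eq_enorm]; rfl
    rw [hnorm]
    apply ENNReal.ofReal_le_ofReal
    rcases le_or_gt s r with hsr | hrs
    · rw [if_pos hsr]
      exact le_trans (hyp2 r s hr hs hsr) (le_of_eq (by ring))
    · rw [if_neg (not_le.2 hrs)]
      exact le_trans (hyp1 r s hr hs hrs.le) (le_of_eq (by ring))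
  have hKb' : ∀ r s : ℝ, 0 < r → 0 < s → K r s ≤ ENNReal.ofReal (C * a * (if r ≤ s
      then Real.sqrt (1+(a*s)^2) ^ (-(1/2) - b/2) * Real.sqrt (1+(a*r)^2) ^ (-(1/2) + b/2)
      else Real.sqrt (1+(a*s)^2) ^ (-(1/2) + b/2) * Real.sqrt (1+(a*r)^2) ^ (-(1/2) - b/2))) := by
    intro r s hr hs
    have hnorm : K r s = ENNReal.ofReal (‖G r s‖) := by
      rw [hKdef, ofReal_norm_eq_enorm]; rfl
    rw [hnorm]
    apply ENNReal.ofReal_le_ofReal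
    rcases le_or_gt r s with hrs | hsr
    · rw [if_pos hrs]
      exact le_trans (hyp1 r s hr hs hrs) (le_of_eq (by ring))
    · rw [if_neg (not_le.2 hsr)]
      exact le_trans (hyp2 r s hr hs hsr.le) (le_of_eq (by ring))
  have hKbm : ∀ r : ℝ, Measurable (fun s => ENNReal.ofReal (C * a * (if s ≤ r
      then Real.sqrt (1+(a*r)^2) ^ (-(1/2) - b/2) * Real.sqrt (1+(a*s)^2) ^ (-(1/2) + b/2)
      else Real.sqrt (1+(a*r)^2) ^ (-(1/2) + b/2) * Real.sqrt (1+(a*s)^2) ^ (-(1/2) - b/2))) * h s) := by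
    intro r
    refine Measurable.mul ?_ hhm
    refine Measurable.ennreal_ofReal (measurable_const.mul ?_)
    exact Measurable.ite (measurableSet_le measurable_id measurable_const)
      (measurable_const.mul (w_rpow_meas_real a _))
      (measurable_const.mul (w_rpow_meas_real a _))
  have hrow : ∀ r ∈ Ioi (0:ℝ), ∫⁻ s in Ioi (0:ℝ), K r s * h s ≤
      ENNReal.ofReal (C * ((2:ℝ)^(b/4) * (1+2/b) + (1+2/b))) * h r := by
    intro r hr
    calc ∫⁻ s in Ioi (0:ℝ), K r s * h s
        ≤ ∫⁻ s in Ioi (0:ℝ), ENNReal.ofReal (C * a * (if s ≤ r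
            then Real.sqrt (1+(a*r)^2) ^ (-(1/2) - b/2) * Real.sqrt (1+(a*s)^2) ^ (-(1/2) + b/2)
            else Real.sqrt (1+(a*r)^2) ^ (-(1/2) + b/2) * Real.sqrt (1+(a*s)^2) ^ (-(1/2) - b/2))) * h s :=
          setLIntegral_mono (hKbm r) fun s hs => mul_le_mul_left (hKb r s hr hs) _
      _ ≤ _ := row_bound hb hC ha hr
  have hcol : ∀ s ∈ Ioi (0:ℝ), ∫⁻ r in Ioi (0:ℝ), K r s * h r ≤
      ENNReal.ofReal (C * ((2:ℝ)^(b/4) * (1+2/b) + (1+2/b))) * h s := by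
    intro s hs
    calc ∫⁻ r in Ioi (0:ℝ), K r s * h r
        ≤ ∫⁻ r in Ioi (0:ℝ), ENNReal.ofReal (C * a * (if r ≤ s
            then Real.sqrt (1+(a*s)^2) ^ (-(1/2) - b/2) * Real.sqrt (1+(a*r)^2) ^ (-(1/2) + b/2)
            else Real.sqrt (1+(a*s)^2) ^ (-(1/2) + b/2) * Real.sqrt (1+(a*r)^2) ^ (-(1/2) - b/2))) * h r :=
          setLIntegral_mono (hKbm s) fun r hr => mul_le_mul_left (hKb' r s hr hs) _
      _ ≤ _ := row_bound hb hC ha hs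
  have main := schur_test hKm hKfin hhm hh0 hht hrow hcol (fun s => (‖f s‖₊ : ℝ≥0∞))
  have hTf : ∀ r : ℝ, (‖∫ s in Ioi (0:ℝ), G r s * f s‖₊ : ℝ≥0∞) ≤
      ∫⁻ s in Ioi (0:ℝ), K r s * (‖f s‖₊ : ℝ≥0∞) := by
    intro r
    refine le_trans (enorm_integral_le_lintegral_enorm _) (le_of_eq (lintegral_congr fun s => ?_))
    rw [hKdef]
    simp [nnnorm_mul]; rfl
  rw [eLpNorm_eq_lintegral_rpow_enorm_toReal (by norm_num) (by norm_num),
    eLpNorm_eq_lintegral_rpow_enorm_toReal (by norm_num) (by norm_num)]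
  have htoReal : (2:ℝ≥0∞).toReal = (2:ℝ) := by norm_num
  rw [htoReal]
  calc (∫⁻ r in Ioi (0:ℝ), (‖∫ s in Ioi (0:ℝ), G r s * f s‖₊ : ℝ≥0∞) ^ (2:ℝ)) ^ ((1:ℝ)/2)
      ≤ ((ENNReal.ofReal (C * ((2:ℝ)^(b/4) * (1+2/b) + (1+2/b)))) ^ (2:ℝ) *
          ∫⁻ s in Ioi (0:ℝ), (‖f s‖₊ : ℝ≥0∞) ^ (2:ℝ)) ^ ((1:ℝ)/2) := by
        refine ENNReal.rpow_le_rpow ?_ (by norm_num)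
        refine le_trans (lintegral_mono fun r => ENNReal.rpow_le_rpow (hTf r) (by norm_num)) main
    _ = ENNReal.ofReal (C * ((2:ℝ)^(b/4) * (1+2/b) + (1+2/b))) *
          (∫⁻ s in Ioi (0:ℝ), (‖f s‖₊ : ℝ≥0∞) ^ (2:ℝ)) ^ ((1:ℝ)/2) := by
        rw [ENNReal.mul_rpow_of_nonneg _ _ (by norm_num : (0:ℝ) ≤ 1/2)]
        congr 1
        exact sq_rpow_half _
end
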